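/- arXiv:2603.10479 — 8 statements merged into one kernel-verified Lean document; each statement's English description precedes it below -/
import Mathlib

section
/- Let G=(V,E) be a finite connected simple graph and let δ ≥ 1. If ω and ω' are two weights on G satisfying δ⁻¹ ≤ ω_e ≤ δ and δ⁻¹ ≤ ω'_e ≤ δ for every edge e, then for every edge {x,y} the Lin–Lu–Yau curvatures with respect to ω and ω' satisfy |κ_ω(x,y) − κ_{ω'}(x,y)| ≤ 4δ³·|E|²·max_{e∈E}|ω_e − ω'_e|. In particular, for each edge the curvature is a locally Lipschitz function of the weight vector on the open cone of positive weights. -/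
open Finset

variable {V : Type*} [Fintype V] [DecidableEq V]

/-- The weighted vertex measure `m(x) = Σ_{y ∼ x} ω_{xy}`. -/
noncomputable def vm (G : SimpleGraph V) [DecidableRel G.Adj] (w : Sym2 V → ℝ) (x : V) : ℝ :=
  ∑ y ∈ G.neighborFinset x, w s(x, y)

/-- The weighted Laplacian `Δf(x) = (1/m(x))·Σ_{z∼x} ω_{xz}·(f(z) − f(x))`. -/
noncomputable def lap (G : SimpleGraph V) [DecidableRel G.Adj] (w : Sym2 V → ℝ)
    (f : V → ℝ) (x : V) : ℝ :=
  (1 / vm G w x) * ∑ z ∈ G.neighborFinset x, w s(x, z) * (f z - f x)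

/-- `f : V → ℝ` is 1-Lipschitz with respect to the graph distance. -/
def IsLip (G : SimpleGraph V) (f : V → ℝ) : Prop :=
  ∀ u v : V, |f u - f v| ≤ (G.dist u v : ℝ)

/-- The Lin–Lu–Yau curvature
`κ(x,y) = inf { (Δf(x) − Δf(y))/d(x,y) : f 1-Lipschitz, f(y) − f(x) = d(x,y) }`. -/
noncomputable def lly (G : SimpleGraph V) [DecidableRel G.Adj] (w : Sym2 V → ℝ) (x y : V) : ℝ :=
  sInf {r : ℝ | ∃ f : V → ℝ, IsLip G f ∧ f y - f x = (G.dist x y : ℝ) ∧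
    r = (lap G w f x - lap G w f y) / (G.dist x y : ℝ)}

lemma mem_edge_of_nbr {G : SimpleGraph V} [DecidableRel G.Adj] {v z : V}
    (h : z ∈ G.neighborFinset v) : s(v, z) ∈ G.edgeFinset := by
  rw [SimpleGraph.mem_edgeFinset, SimpleGraph.mem_edgeSet]
  exact (SimpleGraph.mem_neighborFinset _ _ _).mp h

/-- lower bound on the vertex measure -/
lemma vm_lb {G : SimpleGraph V} [DecidableRel G.Adj] {δ : ℝ} {w : Sym2 V → ℝ}
    (hw : ∀ e ∈ G.edgeFinset, δ⁻¹ ≤ w e ∧ w e ≤ δ) (v : V) :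
    ((G.neighborFinset v).card : ℝ) * δ⁻¹ ≤ vm G w v := by
  have : ∀ z ∈ G.neighborFinset v, δ⁻¹ ≤ w s(v, z) := fun z hz =>
    (hw _ (mem_edge_of_nbr hz)).1
  calc ((G.neighborFinset v).card : ℝ) * δ⁻¹
      = ∑ _z ∈ G.neighborFinset v, δ⁻¹ := by rw [Finset.sum_const, nsmul_eq_mul]
    _ ≤ vm G w v := Finset.sum_le_sum this

lemma abs_S_le_vm {G : SimpleGraph V} [DecidableRel G.Adj] {δ : ℝ} (hδ : 1 ≤ δ)
    {w : Sym2 V → ℝ} (hw : ∀ e ∈ G.edgeFinset, δ⁻¹ ≤ w e ∧ w e ≤ δ)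
    {f : V → ℝ} (hf : IsLip G f) (v : V) :
    |∑ z ∈ G.neighborFinset v, w s(v, z) * (f z - f v)| ≤ vm G w v := by
  refine (Finset.abs_sum_le_sum_abs _ _).trans (Finset.sum_le_sum ?_)
  intro z hz
  have hadj : G.Adj v z := (SimpleGraph.mem_neighborFinset _ _ _).mp hz
  have hd : G.dist z v = 1 := SimpleGraph.dist_eq_one_iff_adj.mpr hadj.symm
  have h1 : |f z - f v| ≤ 1 := by have := hf z v; rw [hd] at this; simpa using this
  have hwpos : 0 < w s(v, z) :=
    lt_of_lt_of_le (by positivity) (hw _ (mem_edge_of_nbr hz)).1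
  rw [abs_mul, abs_of_pos hwpos]
  nlinarith [abs_nonneg (f z - f v)]

lemma vm_pos {G : SimpleGraph V} [DecidableRel G.Adj] {δ : ℝ} (hδ : 1 ≤ δ)
    {w : Sym2 V → ℝ} (hw : ∀ e ∈ G.edgeFinset, δ⁻¹ ≤ w e ∧ w e ≤ δ)
    {v : V} (hv : (G.neighborFinset v).Nonempty) : 0 < vm G w v := by
  have h1 : (1 : ℝ) ≤ (G.neighborFinset v).card := by
    exact_mod_cast Finset.card_pos.mpr hv
  have := vm_lb hw v
  have hδ0 : (0:ℝ) < δ⁻¹ := by positivity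
  nlinarith

lemma abs_lap_le_one {G : SimpleGraph V} [DecidableRel G.Adj] {δ : ℝ} (hδ : 1 ≤ δ)
    {w : Sym2 V → ℝ} (hw : ∀ e ∈ G.edgeFinset, δ⁻¹ ≤ w e ∧ w e ≤ δ)
    {f : V → ℝ} (hf : IsLip G f) {v : V} (hv : (G.neighborFinset v).Nonempty) :
    |lap G w f v| ≤ 1 := by
  have hm := vm_pos hδ hw hv
  have hS := abs_S_le_vm hδ hw hf v
  rw [lap, abs_mul, abs_of_pos (by positivity : (0:ℝ) < 1 / vm G w v)]
  rw [div_mul_eq_mul_div, one_mul, div_le_one hm]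
  exact hS

/-- key per-vertex Lipschitz estimate for the Laplacian in the weights -/
lemma lap_diff_le {G : SimpleGraph V} [DecidableRel G.Adj] {δ M : ℝ} (hδ : 1 ≤ δ)
    {w w' : Sym2 V → ℝ}
    (hw : ∀ e ∈ G.edgeFinset, δ⁻¹ ≤ w e ∧ w e ≤ δ)
    (hw' : ∀ e ∈ G.edgeFinset, δ⁻¹ ≤ w' e ∧ w' e ≤ δ)
    (hM : ∀ e ∈ G.edgeFinset, |w e - w' e| ≤ M) (hM0 : 0 ≤ M)
    {f : V → ℝ} (hf : IsLip G f) {v : V} (hv : (G.neighborFinset v).Nonempty) :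
    |lap G w f v - lap G w' f v| ≤ 2 * δ * M := by
  set m := vm G w v with hmdef
  set m' := vm G w' v with hm'def
  set S := ∑ z ∈ G.neighborFinset v, w s(v, z) * (f z - f v) with hSdef
  set S' := ∑ z ∈ G.neighborFinset v, w' s(v, z) * (f z - f v) with hS'def
  set D := ((G.neighborFinset v).card : ℝ) with hDdef
  have hm : 0 < m := vm_pos hδ hw hv
  have hm' : 0 < m' := vm_pos hδ hw' hv
  have hS : |S| ≤ m := abs_S_le_vm hδ hw hf v
  have habs1 : ∀ z ∈ G.neighborFinset v, |f z - f v| ≤ 1 := by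
    intro z hz
    have hadj : G.Adj v z := (SimpleGraph.mem_neighborFinset _ _ _).mp hz
    have hd : G.dist z v = 1 := SimpleGraph.dist_eq_one_iff_adj.mpr hadj.symm
    have := hf z v; rw [hd] at this; simpa using this
  have hmm' : |m - m'| ≤ D * M := by
    rw [hmdef, hm'def, vm, vm, ← Finset.sum_sub_distrib]
    refine (Finset.abs_sum_le_sum_abs _ _).trans ?_
    calc ∑ z ∈ G.neighborFinset v, |w s(v,z) - w' s(v,z)|
        ≤ ∑ _z ∈ G.neighborFinset v, M :=
          Finset.sum_le_sum fun z hz => hM _ (mem_edge_of_nbr hz)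
      _ = D * M := by rw [Finset.sum_const, nsmul_eq_mul]
  have hSS' : |S - S'| ≤ D * M := by
    rw [hSdef, hS'def, ← Finset.sum_sub_distrib]
    refine (Finset.abs_sum_le_sum_abs _ _).trans ?_
    calc ∑ z ∈ G.neighborFinset v, |w s(v,z) * (f z - f v) - w' s(v,z) * (f z - f v)|
        ≤ ∑ _z ∈ G.neighborFinset v, M := by
          refine Finset.sum_le_sum fun z hz => ?_
          have h1 := habs1 z hz
          have h2 := hM _ (mem_edge_of_nbr hz)
          have : w s(v,z) * (f z - f v) - w' s(v,z) * (f z - f v)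
              = (w s(v,z) - w' s(v,z)) * (f z - f v) := by ring
          rw [this, abs_mul]
          nlinarith [abs_nonneg (w s(v,z) - w' s(v,z)), abs_nonneg (f z - f v)]
      _ = D * M := by rw [Finset.sum_const, nsmul_eq_mul]
  have hD : D ≤ δ * m' := by
    have := vm_lb hw' v
    have hδ0 : (0:ℝ) < δ := lt_of_lt_of_le one_pos hδ
    rw [← hDdef, ← hm'def] at this
    calc D = δ * (D * δ⁻¹) := by field_simp
      _ ≤ δ * m' := by nlinarith
  have heq : lap G w f v - lap G w' f v = (S * (m' - m) + (S - S') * m) / (m * m') := by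
    rw [lap, lap, ← hmdef, ← hm'def, ← hSdef, ← hS'def]
    field_simp
    ring
  rw [heq, abs_div, abs_of_pos (by positivity : (0:ℝ) < m * m'), div_le_iff₀ (by positivity)]
  have h1 : |S * (m' - m) + (S - S') * m| ≤ |S| * |m' - m| + |S - S'| * m := by
    refine (abs_add_le _ _).trans ?_
    rw [abs_mul, abs_mul, abs_of_pos hm]
  have h2 : |S| * |m' - m| ≤ m * (D * M) := by
    rw [abs_sub_comm] at hmm'
    nlinarith [abs_nonneg S, abs_nonneg (m' - m)]
  have h3 : |S - S'| * m ≤ (D * M) * m := by nlinarith [abs_nonneg (S - S')]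
  have h4 : D * M ≤ δ * m' * M := by nlinarith
  nlinarith

/-- Local Lipschitz continuity of the Lin–Lu–Yau curvature in the weights: if
`δ⁻¹ ≤ ω_e, ω'_e ≤ δ` on every edge (with `δ ≥ 1`), then for every edge `{x,y}`,
`|κ_ω(x,y) − κ_{ω'}(x,y)| ≤ 4·δ³·|E|²·max_{e∈E} |ω_e − ω'_e|`. -/
theorem lly_locally_lipschitz (G : SimpleGraph V) [DecidableRel G.Adj]
    (hconn : G.Connected) (δ : ℝ) (hδ : 1 ≤ δ) (w w' : Sym2 V → ℝ)
    (hw : ∀ e ∈ G.edgeFinset, δ⁻¹ ≤ w e ∧ w e ≤ δ)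
    (hw' : ∀ e ∈ G.edgeFinset, δ⁻¹ ≤ w' e ∧ w' e ≤ δ)
    (x y : V) (hxy : G.Adj x y) :
    |lly G w x y - lly G w' x y| ≤
      4 * δ ^ 3 * (G.edgeFinset.card : ℝ) ^ 2 *
        G.edgeFinset.sup' ⟨s(x, y), by simpa using hxy⟩ (fun e => |w e - w' e|) := by
  have hexy : s(x, y) ∈ G.edgeFinset := by simpa using hxy
  set M : ℝ := G.edgeFinset.sup' ⟨s(x, y), by simpa using hxy⟩ (fun e => |w e - w' e|) with hMdef
  have hM : ∀ e ∈ G.edgeFinset, |w e - w' e| ≤ M := fun e he =>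
    Finset.le_sup' (fun e => |w e - w' e|) he
  have hM0 : 0 ≤ M := le_trans (abs_nonneg _) (hM _ hexy)
  have hdxy : G.dist x y = 1 := SimpleGraph.dist_eq_one_iff_adj.mpr hxy
  have hvx : (G.neighborFinset x).Nonempty := ⟨y, (SimpleGraph.mem_neighborFinset _ _ _).mpr hxy⟩
  have hvy : (G.neighborFinset y).Nonempty :=
    ⟨x, (SimpleGraph.mem_neighborFinset _ _ _).mpr hxy.symm⟩
  set A := {r : ℝ | ∃ f : V → ℝ, IsLip G f ∧ f y - f x = (G.dist x y : ℝ) ∧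
    r = (lap G w f x - lap G w f y) / (G.dist x y : ℝ)} with hA
  set B := {r : ℝ | ∃ f : V → ℝ, IsLip G f ∧ f y - f x = (G.dist x y : ℝ) ∧
    r = (lap G w' f x - lap G w' f y) / (G.dist x y : ℝ)} with hB
  -- the distance-to-x function witnesses nonemptiness
  have hflip : IsLip G (fun v => (G.dist x v : ℝ)) := by
    intro u v
    rw [abs_sub_le_iff]
    constructor
    · have h := hconn.dist_triangle (u := x) (v := v) (w := u)
      have hc : G.dist v u = G.dist u v := SimpleGraph.dist_comm
      rw [hc] at h
      have : (G.dist x u : ℝ) ≤ (G.dist x v : ℝ) + (G.dist u v : ℝ) := by exact_mod_cast h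
      linarith
    · have h := hconn.dist_triangle (u := x) (v := u) (w := v)
      have : (G.dist x v : ℝ) ≤ (G.dist x u : ℝ) + (G.dist u v : ℝ) := by exact_mod_cast h
      linarith
  have hfeq : (fun v => (G.dist x v : ℝ)) y - (fun v => (G.dist x v : ℝ)) x
      = (G.dist x y : ℝ) := by simp [SimpleGraph.dist_self]
  have hAne : A.Nonempty := ⟨_, _, hflip, hfeq, rfl⟩
  have hBne : B.Nonempty := ⟨_, _, hflip, hfeq, rfl⟩
  have hAbdd : BddBelow A := by
    refine ⟨-2, ?_⟩
    rintro r ⟨f, hf, -, rfl⟩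
    have h1 := abs_lap_le_one hδ hw hf hvx
    have h2 := abs_lap_le_one hδ hw hf hvy
    rw [hdxy]
    rw [abs_le] at h1 h2
    simp only [Nat.cast_one, div_one]
    linarith [h1.1, h2.2]
  have hBbdd : BddBelow B := by
    refine ⟨-2, ?_⟩
    rintro r ⟨f, hf, -, rfl⟩
    have h1 := abs_lap_le_one hδ hw' hf hvx
    have h2 := abs_lap_le_one hδ hw' hf hvy
    rw [hdxy]
    rw [abs_le] at h1 h2
    simp only [Nat.cast_one, div_one]
    linarith [h1.1, h2.2]
  -- pointwise estimate
  have key : ∀ f : V → ℝ, IsLip G f →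
      |(lap G w f x - lap G w f y) / (G.dist x y : ℝ)
        - (lap G w' f x - lap G w' f y) / (G.dist x y : ℝ)| ≤ 4 * δ * M := by
    intro f hf
    have h1 := lap_diff_le hδ hw hw' hM hM0 hf hvx
    have h2 := lap_diff_le hδ hw hw' hM hM0 hf hvy
    rw [hdxy]
    simp only [Nat.cast_one, div_one]
    have heq : (lap G w f x - lap G w f y) - (lap G w' f x - lap G w' f y)
        = (lap G w f x - lap G w' f x) - (lap G w f y - lap G w' f y) := by ring
    rw [heq]
    calc |(lap G w f x - lap G w' f x) - (lap G w f y - lap G w' f y)|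
        ≤ |lap G w f x - lap G w' f x| + |lap G w f y - lap G w' f y| := abs_sub _ _
      _ ≤ 2 * δ * M + 2 * δ * M := add_le_add h1 h2
      _ = 4 * δ * M := by ring
  have h1 : sInf A ≤ sInf B + 4 * δ * M := by
    rw [← sub_le_iff_le_add]
    refine le_csInf hBne ?_
    rintro b ⟨f, hf1, hf2, rfl⟩
    have ha : (lap G w f x - lap G w f y) / (G.dist x y : ℝ) ∈ A := ⟨f, hf1, hf2, rfl⟩
    have h := csInf_le hAbdd ha
    have hk := key f hf1
    rw [abs_le] at hk
    linarith [hk.1]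
  have h2 : sInf B ≤ sInf A + 4 * δ * M := by
    rw [← sub_le_iff_le_add]
    refine le_csInf hAne ?_
    rintro a ⟨f, hf1, hf2, rfl⟩
    have hb : (lap G w' f x - lap G w' f y) / (G.dist x y : ℝ) ∈ B := ⟨f, hf1, hf2, rfl⟩
    have h := csInf_le hBbdd hb
    have hk := key f hf1
    rw [abs_le] at hk
    linarith [hk.2]
  have hmain : |lly G w x y - lly G w' x y| ≤ 4 * δ * M := by
    rw [lly, lly, ← hA, ← hB, abs_sub_le_iff]
    constructor <;> linarith
  refine hmain.trans ?_
  have hc : (1 : ℝ) ≤ (G.edgeFinset.card : ℝ) := by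
    exact_mod_cast Finset.card_pos.mpr ⟨_, hexy⟩
  have hδ0 : (0:ℝ) < δ := lt_of_lt_of_le one_pos hδ
  have hδ3 : δ ≤ δ ^ 3 := by nlinarith [sq_nonneg δ, sq_nonneg (δ - 1), sq_nonneg (δ + 1)]
  have hc2 : (1:ℝ) ≤ (G.edgeFinset.card : ℝ) ^ 2 := by nlinarith
  have hstep : 4 * δ ≤ 4 * δ ^ 3 * (G.edgeFinset.card : ℝ) ^ 2 := by
    calc 4 * δ ≤ 4 * δ ^ 3 := by linarith
      _ = 4 * δ ^ 3 * 1 := by ring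
      _ ≤ 4 * δ ^ 3 * (G.edgeFinset.card : ℝ) ^ 2 := by
          refine mul_le_mul_of_nonneg_left hc2 ?_
          positivity
  exact mul_le_mul_of_nonneg_right hstep hM0
end

section
/- Let G=(V,E) be a finite connected simple graph with girth at least 6 (no cycles of length 3, 4 or 5) and let ω be a weight on G. Then for every edge {x,y}, the Lin–Lu–Yau curvature is given by the explicit formula κ(x,y) = 2·ω_xy·(1/m(x) + 1/m(y)) − 2. -/
open Finset

variable {V : Type*} [Fintype V] [DecidableEq V]

section Aux
open SimpleGraph

lemma no_tri {G : SimpleGraph V} (hg : 6 ≤ G.egirth) {a b c : V}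
    (hab : G.Adj a b) (hbc : G.Adj b c) (hca : G.Adj c a) : False := by
  have hw : (Walk.cons hab (Walk.cons hbc (Walk.cons hca Walk.nil))).IsCycle := by
    simp [Walk.isCycle_def, Walk.isTrail_def, Sym2.eq_iff,
      hab.ne, hbc.ne, hca.ne, hab.ne', hbc.ne', hca.ne']
  have := SimpleGraph.le_egirth.mp hg a _ hw
  simp [Walk.length_cons] at this
  norm_num at this

lemma no_c4 {G : SimpleGraph V} (hg : 6 ≤ G.egirth) {a b c d : V}
    (hab : G.Adj a b) (hbc : G.Adj b c) (hcd : G.Adj c d) (hda : G.Adj d a)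
    (hac : a ≠ c) (hbd : b ≠ d) : False := by
  have hw : (Walk.cons hab (Walk.cons hbc (Walk.cons hcd (Walk.cons hda Walk.nil)))).IsCycle := by
    simp [Walk.isCycle_def, Walk.isTrail_def, Sym2.eq_iff,
      hab.ne, hbc.ne, hcd.ne, hda.ne, hab.ne', hbc.ne', hcd.ne', hda.ne', hac, hbd, hac.symm, hbd.symm]
  have := SimpleGraph.le_egirth.mp hg a _ hw
  simp [Walk.length_cons] at this
  norm_num at this

lemma no_c5 {G : SimpleGraph V} (hg : 6 ≤ G.egirth) {a b c d e : V}
    (hab : G.Adj a b) (hbc : G.Adj b c) (hcd : G.Adj c d) (hde : G.Adj d e) (hea : G.Adj e a)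
    (hac : a ≠ c) (had : a ≠ d) (hbd : b ≠ d) (hbe : b ≠ e) (hce : c ≠ e) : False := by
  have hw : (Walk.cons hab (Walk.cons hbc (Walk.cons hcd (Walk.cons hde (Walk.cons hea Walk.nil))))).IsCycle := by
    simp [Walk.isCycle_def, Walk.isTrail_def, Sym2.eq_iff,
      hab.ne, hbc.ne, hcd.ne, hde.ne, hea.ne, hab.ne', hbc.ne', hcd.ne', hde.ne', hea.ne',
      hac, had, hbd, hbe, hce, hac.symm, had.symm, hbd.symm, hbe.symm, hce.symm]
  have := SimpleGraph.le_egirth.mp hg a _ hw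
  simp [Walk.length_cons] at this
  norm_num at this


lemma dist_two {G : SimpleGraph V} (hconn : G.Connected) (hg : 6 ≤ G.egirth) {x y u : V}
    (hxy : G.Adj x y) (hyu : G.Adj y u) (hux : u ≠ x) : G.dist x u = 2 := by
  have hna : ¬ G.Adj x u := fun h => no_tri hg hxy hyu h.symm
  have h1 : G.dist x u ≤ 2 := by
    have := hconn.dist_triangle (u := x) (v := y) (w := u)
    rw [(SimpleGraph.dist_eq_one_iff_adj).mpr hxy, (SimpleGraph.dist_eq_one_iff_adj).mpr hyu] at this
    omega
  have h0 : G.dist x u ≠ 0 := by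
    rw [SimpleGraph.dist_ne_zero_iff_ne_and_reachable]
    exact ⟨hux.symm, hconn x u⟩
  have hne1 : G.dist x u ≠ 1 := fun h => hna (SimpleGraph.dist_eq_one_iff_adj.mp h)
  omega

lemma dist_three {G : SimpleGraph V} (hconn : G.Connected) (hg : 6 ≤ G.egirth) {x y z u : V}
    (hxy : G.Adj x y) (hxz : G.Adj x z) (hyu : G.Adj y u)
    (hzy : z ≠ y) (hux : u ≠ x) : G.dist z u = 3 := by
  have hzu : z ≠ u := fun h => no_tri hg hxy (by rw [h]; exact hyu) hxz.symm
  have hna : ¬ G.Adj z u := fun h => no_c4 hg hxy hyu h.symm hxz.symm hux.symm hzy.symm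
  have h1 : G.dist z u ≤ 3 := by
    have t1 := hconn.dist_triangle (u := z) (v := x) (w := u)
    have t2 := hconn.dist_triangle (u := x) (v := y) (w := u)
    rw [(SimpleGraph.dist_eq_one_iff_adj).mpr hxz.symm] at t1
    rw [(SimpleGraph.dist_eq_one_iff_adj).mpr hxy, (SimpleGraph.dist_eq_one_iff_adj).mpr hyu] at t2
    omega
  have h0 : G.dist z u ≠ 0 := by
    rw [SimpleGraph.dist_ne_zero_iff_ne_and_reachable]
    exact ⟨hzu, hconn z u⟩
  have hne1 : G.dist z u ≠ 1 := fun h => hna (SimpleGraph.dist_eq_one_iff_adj.mp h)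
  have hne2 : G.dist z u ≠ 2 := by
    intro h2
    obtain ⟨p, hp⟩ := hconn.exists_walk_length_eq_dist z u
    rw [h2] at hp
    cases p with
    | nil => simp at hp
    | cons ha q =>
      cases q with
      | nil => simp at hp
      | @cons _ c _ hb q' =>
        rename_i v
        have hc : q'.length = 0 := by simpa using hp
        have hcu : c = u := q'.eq_of_length_eq_zero hc
        subst hcu
        -- ha : z ∼ v, hb : v ∼ u ; build 5-cycle x y u v z
        have hvx : v ≠ x := fun h => no_tri hg hxy hyu (by rw [← h]; exact hb.symm)
        have hvy : v ≠ y := fun h => no_tri hg hxy (by rw [← h]; exact ha.symm) hxz.symm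
        exact no_c5 hg hxy hyu hb.symm ha.symm hxz.symm
          hux.symm hvx.symm hvy.symm hzy.symm hzu.symm
  omega

end Aux

/-- On a graph with girth at least 6, the Lin–Lu–Yau curvature of an edge `{x,y}` is given by
the explicit formula `κ(x,y) = 2·ω_{xy}·(1/m(x) + 1/m(y)) − 2`. -/
theorem lly_explicit_formula_of_girth (G : SimpleGraph V) [DecidableRel G.Adj]
    (hconn : G.Connected) (hgirth : 6 ≤ G.egirth)
    (w : Sym2 V → ℝ) (hw : ∀ e ∈ G.edgeFinset, 0 < w e)
    (x y : V) (hxy : G.Adj x y) :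
    lly G w x y = 2 * w s(x, y) * (1 / vm G w x + 1 / vm G w y) - 2 := by
  classical
  have d1 : G.dist x y = 1 := SimpleGraph.dist_eq_one_iff_adj.mpr hxy
  have hwpos : ∀ a b : V, G.Adj a b → 0 < w s(a, b) := by
    intro a b h
    exact hw _ (by rwa [SimpleGraph.mem_edgeFinset, SimpleGraph.mem_edgeSet])
  have hmx : 0 < vm G w x :=
    Finset.sum_pos (fun z hz => hwpos x z (G.mem_neighborFinset x z |>.mp hz))
      ⟨y, (G.mem_neighborFinset x y).mpr hxy⟩
  have hmy : 0 < vm G w y :=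
    Finset.sum_pos (fun z hz => hwpos y z (G.mem_neighborFinset y z |>.mp hz))
      ⟨x, (G.mem_neighborFinset y x).mpr hxy.symm⟩
  set c : ℝ := 2 * w s(x, y) * (1 / vm G w x + 1 / vm G w y) - 2 with hc
  -- the optimal function
  set Q : Finset V := insert y (G.neighborFinset y) with hQ
  have hQy : y ∈ Q := Finset.mem_insert_self _ _
  have hQx : x ∈ Q := Finset.mem_insert_of_mem ((G.mem_neighborFinset y x).mpr hxy.symm)
  have hQne : Q.Nonempty := ⟨y, hQy⟩
  have hmemQ : ∀ p ∈ Q, p = y ∨ G.Adj y p := by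
    intro p hp
    rcases Finset.mem_insert.mp hp with h | h
    · exact Or.inl h
    · exact Or.inr ((G.mem_neighborFinset y p).mp h)
  set g : V → ℝ := fun p => if p = x then 0 else if p = y then 1 else 2 with hg
  have gx : g x = 0 := by simp [hg]
  have gy : g y = 1 := by simp [hg, hxy.ne']
  have gu : ∀ u : V, u ≠ x → u ≠ y → g u = 2 := by intro u h1 h2; simp [hg, h1, h2]
  have glip : ∀ p ∈ Q, ∀ q ∈ Q, g p - g q ≤ (G.dist p q : ℝ) := by
    have dnn : ∀ a b : V, (0:ℝ) ≤ (G.dist a b : ℝ) := fun a b => Nat.cast_nonneg _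
    intro p hp q hq
    rcases hmemQ p hp with rfl | hp' <;> rcases hmemQ q hq with rfl | hq'
    · simp [SimpleGraph.dist_self]
    · by_cases hqx : q = x
      · subst hqx
        have : G.dist p q = 1 := by rw [SimpleGraph.dist_comm]; exact SimpleGraph.dist_eq_one_iff_adj.mpr hxy
        rw [gy, gx, this]; norm_num
      · rw [gy, gu q hqx hq'.ne']; linarith [dnn p q]
    · by_cases hpx : p = x
      · subst hpx
        rw [gx, gy]; linarith [dnn p q]
      · rw [gu p hpx hp'.ne', gy]
        have : G.dist p q = 1 := SimpleGraph.dist_eq_one_iff_adj.mpr hp'.symm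
        rw [this]; norm_num
    · by_cases hpx : p = x <;> by_cases hqx : q = x
      · subst hpx; subst hqx; simp [SimpleGraph.dist_self]
      · subst hpx; rw [gx, gu q hqx hq'.ne']; linarith [dnn p q]
      · subst hqx
        rw [gu p hpx hp'.ne', gx]
        have : G.dist p q = 2 := by
          rw [SimpleGraph.dist_comm]; exact dist_two hconn hgirth hxy hp' hpx
        rw [this]; norm_num
      · rw [gu p hpx hp'.ne', gu q hqx hq'.ne']; linarith [dnn p q]
  set f : V → ℝ := fun v => Q.sup' hQne (fun p => g p - (G.dist v p : ℝ)) with hf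
  have K1 : ∀ (v : V), ∀ p ∈ Q, g p - (G.dist v p : ℝ) ≤ f v := by
    intro v p hp
    exact Finset.le_sup' (fun p => g p - (G.dist v p : ℝ)) hp
  have flip : IsLip G f := by
    have key : ∀ u v : V, f u - f v ≤ (G.dist u v : ℝ) := by
      intro u v
      rw [sub_le_iff_le_add]
      apply Finset.sup'_le
      intro p hp
      have tri : G.dist v p ≤ G.dist v u + G.dist u p := hconn.dist_triangle
      have tri' : (G.dist v p : ℝ) ≤ (G.dist v u : ℝ) + (G.dist u p : ℝ) := by exact_mod_cast tri
      have hcomm : (G.dist v u : ℝ) = (G.dist u v : ℝ) := by rw [SimpleGraph.dist_comm]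
      have h2 := K1 v p hp
      linarith
    intro u v
    rw [abs_sub_le_iff]
    refine ⟨key u v, ?_⟩
    have := key v u
    rwa [SimpleGraph.dist_comm] at this
  have feq : ∀ p ∈ Q, f p = g p := by
    intro p hp
    refine le_antisymm (Finset.sup'_le _ _ fun q hq => ?_) ?_
    · have h := glip q hq p hp
      have : (G.dist q p : ℝ) = (G.dist p q : ℝ) := by rw [SimpleGraph.dist_comm]
      linarith
    · have := K1 p p hp
      simpa [SimpleGraph.dist_self] using this
  have fx : f x = 0 := by rw [feq x hQx, gx]
  have fy : f y = 1 := by rw [feq y hQy, gy]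
  have fu : ∀ u : V, G.Adj y u → u ≠ x → f u = 2 := by
    intro u hu hux
    rw [feq u (Finset.mem_insert_of_mem ((G.mem_neighborFinset y u).mpr hu)), gu u hux hu.ne']
  have fz : ∀ z : V, G.Adj x z → z ≠ y → f z = -1 := by
    intro z hxz hzy
    refine le_antisymm (Finset.sup'_le _ _ fun p hp => ?_) ?_
    · rcases hmemQ p hp with rfl | hp'
      · have : G.dist z p = 2 := by
          rw [SimpleGraph.dist_comm]
          exact dist_two hconn hgirth hxy.symm hxz hzy
        rw [gy, this]; norm_num
      · by_cases hpx : p = x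
        · subst hpx
          have : G.dist z p = 1 := SimpleGraph.dist_eq_one_iff_adj.mpr hxz.symm
          rw [gx, this]; norm_num
        · have : G.dist z p = 3 := dist_three hconn hgirth hxy hxz hp' hzy hpx
          rw [gu p hpx hp'.ne', this]; norm_num
    · have h := K1 z y hQy
      have : G.dist z y = 2 := by
        rw [SimpleGraph.dist_comm]
        exact dist_two hconn hgirth hxy.symm hxz hzy
      rw [gy, this] at h
      push_cast at h
      linarith
  -- Laplacian values of f
  have hym : y ∈ G.neighborFinset x := (G.mem_neighborFinset x y).mpr hxy
  have hxm : x ∈ G.neighborFinset y := (G.mem_neighborFinset y x).mpr hxy.symm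
  have hsym : (s(y, x) : Sym2 V) = s(x, y) := Sym2.eq_swap
  have hlapx : lap G w f x = (1 / vm G w x) * (2 * w s(x, y) - vm G w x) := by
    have split := (Finset.add_sum_erase (G.neighborFinset x)
      (fun z => w s(x, z) * (f z - f x)) hym).symm
    have e1 : ∑ z ∈ (G.neighborFinset x).erase y, w s(x, z) * (f z - f x)
        = -∑ z ∈ (G.neighborFinset x).erase y, w s(x, z) := by
      rw [← Finset.sum_neg_distrib]
      refine Finset.sum_congr rfl fun z hz => ?_
      obtain ⟨hzy, hz'⟩ := Finset.mem_erase.mp hz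
      rw [fz z ((G.mem_neighborFinset x z).mp hz') hzy, fx]; ring
    have e2 : w s(x, y) + ∑ z ∈ (G.neighborFinset x).erase y, w s(x, z) = vm G w x := by
      rw [vm]; exact Finset.add_sum_erase _ (fun z => w s(x, z)) hym
    have e3 : ∑ z ∈ (G.neighborFinset x).erase y, w s(x, z) = vm G w x - w s(x, y) := by
      linarith
    rw [lap, split, e1, e3, fy, fx]
    ring
  have hlapy : lap G w f y = (1 / vm G w y) * (vm G w y - 2 * w s(x, y)) := by
    have split := (Finset.add_sum_erase (G.neighborFinset y)
      (fun z => w s(y, z) * (f z - f y)) hxm).symm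
    have e1 : ∑ z ∈ (G.neighborFinset y).erase x, w s(y, z) * (f z - f y)
        = ∑ z ∈ (G.neighborFinset y).erase x, w s(y, z) := by
      refine Finset.sum_congr rfl fun z hz => ?_
      obtain ⟨hzx, hz'⟩ := Finset.mem_erase.mp hz
      rw [fu z ((G.mem_neighborFinset y z).mp hz') hzx, fy]; ring
    have e2 : w s(y, x) + ∑ z ∈ (G.neighborFinset y).erase x, w s(y, z) = vm G w y := by
      rw [vm]; exact Finset.add_sum_erase _ (fun z => w s(y, z)) hxm
    have e3 : ∑ z ∈ (G.neighborFinset y).erase x, w s(y, z) = vm G w y - w s(x, y) := by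
      rw [hsym] at e2; linarith
    rw [lap, split, e1, e3, fx, fy, hsym]
    ring
  have hmem : c ∈ {r : ℝ | ∃ f : V → ℝ, IsLip G f ∧ f y - f x = (G.dist x y : ℝ) ∧
      r = (lap G w f x - lap G w f y) / (G.dist x y : ℝ)} := by
    refine ⟨f, flip, by rw [fx, fy, d1]; norm_num, ?_⟩
    rw [hlapx, hlapy, d1, hc]
    push_cast
    field_simp
    ring
  have hlb : ∀ r ∈ {r : ℝ | ∃ f : V → ℝ, IsLip G f ∧ f y - f x = (G.dist x y : ℝ) ∧
      r = (lap G w f x - lap G w f y) / (G.dist x y : ℝ)}, c ≤ r := by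
    rintro r ⟨F, hF, hFyx, hre⟩
    rw [d1] at hFyx hre
    push_cast at hFyx hre
    rw [div_one] at hre
    have hbx : (1 / vm G w x) * (2 * w s(x, y) - vm G w x) ≤ lap G w F x := by
      have hb1 : ∀ z ∈ (G.neighborFinset x).erase y,
          -(w s(x, z)) ≤ w s(x, z) * (F z - F x) := by
        intro z hz
        obtain ⟨hzy, hz'⟩ := Finset.mem_erase.mp hz
        have hadj := (G.mem_neighborFinset x z).mp hz'
        have hd : G.dist z x = 1 := SimpleGraph.dist_eq_one_iff_adj.mpr hadj.symm
        have habs := hF z x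
        rw [hd] at habs; push_cast at habs
        have h1 : -1 ≤ F z - F x := (abs_le.mp habs).1
        nlinarith [hwpos x z hadj]
      have hsum : ∑ z ∈ (G.neighborFinset x).erase y, -(w s(x, z))
          ≤ ∑ z ∈ (G.neighborFinset x).erase y, w s(x, z) * (F z - F x) :=
        Finset.sum_le_sum hb1
      have e2 : w s(x, y) + ∑ z ∈ (G.neighborFinset x).erase y, w s(x, z) = vm G w x := by
        rw [vm]; exact Finset.add_sum_erase _ (fun z => w s(x, z)) hym
      have split := (Finset.add_sum_erase (G.neighborFinset x)
        (fun z => w s(x, z) * (F z - F x)) hym).symm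
      rw [lap, split, hFyx]
      rw [Finset.sum_neg_distrib] at hsum
      have h2 : 2 * w s(x, y) - vm G w x ≤ w s(x, y) * 1
          + ∑ z ∈ (G.neighborFinset x).erase y, w s(x, z) * (F z - F x) := by
        linarith
      have h3 : (0:ℝ) ≤ 1 / vm G w x := by positivity
      exact mul_le_mul_of_nonneg_left h2 h3
    have hby : lap G w F y ≤ (1 / vm G w y) * (vm G w y - 2 * w s(x, y)) := by
      have hb1 : ∀ z ∈ (G.neighborFinset y).erase x,
          w s(y, z) * (F z - F y) ≤ w s(y, z) := by
        intro z hz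
        obtain ⟨hzx, hz'⟩ := Finset.mem_erase.mp hz
        have hadj := (G.mem_neighborFinset y z).mp hz'
        have hd : G.dist z y = 1 := SimpleGraph.dist_eq_one_iff_adj.mpr hadj.symm
        have habs := hF z y
        rw [hd] at habs; push_cast at habs
        have h1 : F z - F y ≤ 1 := by
          have := (abs_le.mp habs).2; linarith
        nlinarith [hwpos y z hadj]
      have hsum : ∑ z ∈ (G.neighborFinset y).erase x, w s(y, z) * (F z - F y)
          ≤ ∑ z ∈ (G.neighborFinset y).erase x, w s(y, z) :=
        Finset.sum_le_sum hb1
      have e2 : w s(y, x) + ∑ z ∈ (G.neighborFinset y).erase x, w s(y, z) = vm G w y := by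
        rw [vm]; exact Finset.add_sum_erase _ (fun z => w s(y, z)) hxm
      have split := (Finset.add_sum_erase (G.neighborFinset y)
        (fun z => w s(y, z) * (F z - F y)) hxm).symm
      rw [lap, split]
      have hFxy : F x - F y = -1 := by linarith
      have h2 : w s(y, x) * (F x - F y)
          + ∑ z ∈ (G.neighborFinset y).erase x, w s(y, z) * (F z - F y)
          ≤ vm G w y - 2 * w s(x, y) := by
        have e2' : w s(x, y) + ∑ z ∈ (G.neighborFinset y).erase x, w s(y, z) = vm G w y := by
          rw [← hsym]; exact e2
        rw [hFxy, hsym]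
        linarith
      have h3 : (0:ℝ) ≤ 1 / vm G w y := by positivity
      exact mul_le_mul_of_nonneg_left h2 h3
    have hcx : (1 / vm G w x) * (2 * w s(x, y) - vm G w x)
        = 2 * w s(x, y) * (1 / vm G w x) - 1 := by
      field_simp
    have hcy : (1 / vm G w y) * (vm G w y - 2 * w s(x, y))
        = 1 - 2 * w s(x, y) * (1 / vm G w y) := by
      field_simp
    rw [hre, hc]
    rw [hcx] at hbx
    rw [hcy] at hby
    linarith
  exact IsLeast.csInf_eq ⟨hmem, hlb⟩
end

section
/- Let G=(V,E) be a finite connected simple graph with girth at least 6 and at least one edge, and let κ̄ = 2(|V|/|E| − 1). Then some (equivalently, every) constant weight ω_e ≡ c (with c>0) satisfies κ_e(ω) = κ̄ for every edge e if and only if G is regular or semi-regular bipartite. Equivalently, 1/d(x) + 1/d(y) = |V|/|E| holds for every edge {x,y} if and only if G is regular or semi-regular bipartite. -/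
open Finset

variable {V : Type*} [Fintype V] [DecidableEq V]

/-- The Lin–Lu–Yau curvature of an edge `e = {x,y}` on a graph of girth ≥ 6, given by the
explicit formula `κ_e(ω) = 2·ω_e·(1/m(x) + 1/m(y)) − 2`. -/
noncomputable def edgeKappa (G : SimpleGraph V) [DecidableRel G.Adj] (w : Sym2 V → ℝ) :
    Sym2 V → ℝ :=
  Sym2.lift ⟨fun x y => 2 * w s(x, y) * (1 / vm G w x + 1 / vm G w y) - 2, by
    intro x y
    dsimp only
    rw [Sym2.eq_swap]
    ring⟩

/-- `G` is regular: all vertices have the same degree. -/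
def IsRegularGraph (G : SimpleGraph V) [DecidableRel G.Adj] : Prop :=
  ∀ u v : V, G.degree u = G.degree v

/-- `G` is semi-regular bipartite: the vertices split into two parts such that every edge joins
the two parts, and the degree is constant on each part. -/
def IsSemiRegularBipartite (G : SimpleGraph V) [DecidableRel G.Adj] : Prop :=
  ∃ A : Set V, (∀ x y : V, G.Adj x y → (x ∈ A ↔ y ∉ A)) ∧
    (∀ u ∈ A, ∀ v ∈ A, G.degree u = G.degree v) ∧
    (∀ u ∉ A, ∀ v ∉ A, G.degree u = G.degree v)

section Aux

variable {G : SimpleGraph V} [DecidableRel G.Adj]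

private lemma walk_alt {f : V → ℝ} {k t : ℝ}
    (h : ∀ x y, G.Adj x y → f x + f y = k) {u v : V} (w : G.Walk u v) :
    (f u = t ∨ f u = k - t) → (f v = t ∨ f v = k - t) := by
  induction w with
  | nil => exact id
  | cons hadj p ih =>
    intro hu
    apply ih
    have hxy := h _ _ hadj
    rcases hu with h1 | h1
    · right; linarith
    · left; linarith

private lemma deg_pos (hconn : G.Connected) (h2 : 1 < Fintype.card V) (v : V) :
    0 < G.degree v := by
  rw [G.degree_pos_iff_exists_adj]
  obtain ⟨u, hu⟩ := Fintype.exists_ne_of_one_lt_card h2 v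
  obtain ⟨w⟩ := hconn v u
  cases w with
  | nil => exact absurd rfl hu.symm
  | cons hadj _ => exact ⟨_, hadj⟩

private lemma cross_count (A : Finset V)
    (hA : ∀ x y : V, G.Adj x y → (x ∈ A ↔ y ∉ A)) :
    ∑ u ∈ A, G.degree u = G.edgeFinset.card := by
  classical
  have h1 : ∑ u ∈ A, G.degree u = (univ.filter fun d : G.Dart => d.fst ∈ A).card := by
    rw [Finset.card_eq_sum_card_fiberwise
      (s := univ.filter fun d : G.Dart => d.fst ∈ A)
      (f := fun d : G.Dart => d.fst) (t := A) (fun d hd => (Finset.mem_filter.mp hd).2)]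
    refine Finset.sum_congr rfl fun u hu => ?_
    rw [← G.dart_fst_fiber_card_eq_degree u]
    congr 1
    ext d
    simp only [Finset.mem_filter, Finset.mem_univ, true_and]
    constructor
    · exact fun h => ⟨h ▸ hu, h⟩
    · exact fun h => h.2
  rw [h1]
  apply Finset.card_bij (fun d _ => d.edge)
  · intro d hd
    rw [SimpleGraph.mem_edgeFinset]
    exact d.edge_mem
  · intro d1 hd1 d2 hd2 heq
    rw [SimpleGraph.dart_edge_eq_iff] at heq
    rcases heq with rfl | rfl
    · rfl
    · exfalso
      simp only [Finset.mem_filter, Finset.mem_univ, true_and] at hd1 hd2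
      have : d2.snd ∉ A := (hA _ _ d2.adj).mp hd2
      exact this hd1
  · intro e he
    rw [SimpleGraph.mem_edgeFinset] at he
    induction e with
    | _ x y =>
      rw [SimpleGraph.mem_edgeSet] at he
      by_cases hx : x ∈ A
      · exact ⟨⟨(x, y), he⟩, by simpa using hx, rfl⟩
      · have hy : y ∈ A := by
          by_contra hy
          exact hx ((hA _ _ he).mpr hy)
        exact ⟨⟨(y, x), he.symm⟩, by simpa using hy, Sym2.eq_swap⟩

private lemma key (hconn : G.Connected) (hE : G.edgeFinset.Nonempty) :
    (∀ x y : V, G.Adj x y →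
        1 / (G.degree x : ℝ) + 1 / (G.degree y : ℝ) =
          (Fintype.card V : ℝ) / (G.edgeFinset.card : ℝ)) ↔
      (IsRegularGraph G ∨ IsSemiRegularBipartite G) := by
  classical
  obtain ⟨e0, he0⟩ := hE
  have hm : 0 < G.edgeFinset.card := Finset.card_pos.mpr ⟨e0, he0⟩
  have hmR : (0:ℝ) < (G.edgeFinset.card : ℝ) := by exact_mod_cast hm
  -- an edge gives two distinct vertices
  obtain ⟨x0, y0, hxy0⟩ : ∃ x y, G.Adj x y := by
    rw [SimpleGraph.mem_edgeFinset] at he0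
    induction e0 with
    | _ x y => exact ⟨x, y, he0⟩
  have h2 : 1 < Fintype.card V :=
    Fintype.one_lt_card_iff_nontrivial.mpr ⟨x0, y0, hxy0.ne⟩
  have dpos : ∀ v, 0 < G.degree v := deg_pos hconn h2
  have dposR : ∀ v, (0:ℝ) < (G.degree v : ℝ) := fun v => by exact_mod_cast dpos v
  set n : ℝ := (Fintype.card V : ℝ) with hn
  set m : ℝ := (G.edgeFinset.card : ℝ) with hmdef
  constructor
  · intro h
    set t : ℝ := 1 / (G.degree x0 : ℝ) with ht
    have claimC : ∀ v : V, 1 / (G.degree v : ℝ) = t ∨ 1 / (G.degree v : ℝ) = n / m - t := by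
      intro v
      exact walk_alt (f := fun v => 1 / (G.degree v : ℝ)) (k := n / m)
        (fun x y hxy => h x y hxy) (hconn x0 v).some (Or.inl rfl)
    by_cases hreg : n / m - t = t
    · left
      intro u v
      have hu : 1 / (G.degree u : ℝ) = t := by
        rcases claimC u with h1 | h1
        · exact h1
        · rw [h1, hreg]
      have hv : 1 / (G.degree v : ℝ) = t := by
        rcases claimC v with h1 | h1
        · exact h1
        · rw [h1, hreg]
      have h1 := (dposR u).ne'
      have h2 := (dposR v).ne'
      have heq : (1:ℝ) / (G.degree u : ℝ) = 1 / (G.degree v : ℝ) := hu.trans hv.symm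
      field_simp at heq
      exact_mod_cast (by linarith : (G.degree u : ℝ) = G.degree v)
    · right
      refine ⟨{v | 1 / (G.degree v : ℝ) = t}, ?_, ?_, ?_⟩
      · intro x y hxy
        have hsum := h x y hxy
        constructor
        · intro hx hy
          simp only [Set.mem_setOf_eq] at hx hy
          apply hreg
          linarith
        · intro hy
          simp only [Set.mem_setOf_eq] at hy ⊢
          rcases claimC y with h1 | h1
          · exact absurd h1 hy
          · rw [h1] at hsum; linarith
      · intro u hu v hv
        simp only [Set.mem_setOf_eq] at hu hv
        have h1 := (dposR u).ne'
        have h2 := (dposR v).ne'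
        have heq2 : (1:ℝ) / (G.degree u : ℝ) = 1 / (G.degree v : ℝ) := by rw [hu, hv]
        field_simp at heq2
        exact_mod_cast (by linarith : (G.degree u : ℝ) = G.degree v)
      · intro u hu v hv
        simp only [Set.mem_setOf_eq] at hu hv
        have hu' : 1 / (G.degree u : ℝ) = n / m - t := (claimC u).resolve_left hu
        have hv' : 1 / (G.degree v : ℝ) = n / m - t := (claimC v).resolve_left hv
        have h1 := (dposR u).ne'
        have h2 := (dposR v).ne'
        have heq2 : (1:ℝ) / (G.degree u : ℝ) = 1 / (G.degree v : ℝ) := by rw [hu', hv']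
        field_simp at heq2
        exact_mod_cast (by linarith : (G.degree u : ℝ) = G.degree v)
  · rintro (hreg | ⟨A, hA, hdA, hdB⟩)
    · intro x y hxy
      have hsum := G.sum_degrees_eq_twice_card_edges
      have hconst : ∀ v, G.degree v = G.degree x := fun v => hreg v x
      rw [Finset.sum_congr rfl (fun v _ => hconst v), Finset.sum_const, smul_eq_mul] at hsum
      have hd := dposR x
      rw [Finset.card_univ] at hsum
      have hcast : n * (G.degree x : ℝ) = 2 * m := by
        rw [hn, hmdef]; exact_mod_cast hsum
      rw [hreg y x]
      have h2d : (1:ℝ) / (G.degree x : ℝ) + 1 / (G.degree x : ℝ) = 2 / (G.degree x : ℝ) := by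
        ring
      rw [h2d, div_eq_div_iff hd.ne' hmR.ne']
      linarith
    · -- semiregular bipartite
      have main : ∀ x y : V, G.Adj x y → x ∈ A →
          1 / (G.degree x : ℝ) + 1 / (G.degree y : ℝ) = n / m := by
        intro x y hxy hx
        have hy : y ∉ A := (hA x y hxy).mp hx
        set FA : Finset V := univ.filter (· ∈ A) with hFA
        set FB : Finset V := univ.filter (· ∉ A) with hFB
        have hsumA : ∑ u ∈ FA, G.degree u = G.edgeFinset.card := by
          apply cross_count
          intro a b hab
          simp only [hFA, Finset.mem_filter, Finset.mem_univ, true_and]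
          exact hA a b hab
        have hsumB : ∑ u ∈ FB, G.degree u = G.edgeFinset.card := by
          apply cross_count
          intro a b hab
          simp only [hFB, Finset.mem_filter, Finset.mem_univ, true_and]
          have := hA a b hab
          tauto
        have hAconst : ∑ u ∈ FA, G.degree u = FA.card * G.degree x := by
          rw [Finset.sum_congr rfl (fun u hu => hdA u (by simpa [hFA] using hu) x hx),
            Finset.sum_const, smul_eq_mul]
        have hBconst : ∑ u ∈ FB, G.degree u = FB.card * G.degree y := by
          rw [Finset.sum_congr rfl (fun u hu => hdB u (by simpa [hFB] using hu) y hy),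
            Finset.sum_const, smul_eq_mul]
        have hcardV : FA.card + FB.card = Fintype.card V := by
          rw [hFA, hFB]
          rw [Finset.card_filter_add_card_filter_not]
          exact Finset.card_univ
        have ha : (FA.card : ℝ) * (G.degree x : ℝ) = m := by
          rw [hmdef]; exact_mod_cast hAconst ▸ hsumA
        have hb : (FB.card : ℝ) * (G.degree y : ℝ) = m := by
          rw [hmdef]; exact_mod_cast hBconst ▸ hsumB
        have hcv : (FA.card : ℝ) + (FB.card : ℝ) = n := by
          rw [hn]; exact_mod_cast hcardV
        have hdx := dposR x
        have hdy := dposR y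
        rw [div_add_div _ _ hdx.ne' hdy.ne', div_eq_div_iff (by positivity) hmR.ne']
        linear_combination (-(G.degree y : ℝ)) * ha - (G.degree x : ℝ) * hb +
          (G.degree x : ℝ) * (G.degree y : ℝ) * hcv
      intro x y hxy
      by_cases hx : x ∈ A
      · exact main x y hxy hx
      · have hy : y ∈ A := by
          by_contra hy
          exact hx ((hA x y hxy).mpr hy)
        rw [add_comm]
        exact main y x hxy.symm hy

end Aux

/-- A (equivalently, every) constant weight realizes the constant curvature
`κ̄ = 2(|V|/|E| − 1)` iff `G` is regular or semi-regular bipartite; equivalently,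
`1/d(x) + 1/d(y) = |V|/|E|` for every edge iff `G` is regular or semi-regular bipartite. -/
theorem constant_weight_constant_curvature (G : SimpleGraph V) [DecidableRel G.Adj]
    (hconn : G.Connected) (hgirth : 6 ≤ G.egirth) (hE : G.edgeFinset.Nonempty) :
    (∀ c : ℝ, 0 < c →
      ((∀ e ∈ G.edgeFinset, edgeKappa G (fun _ => c) e =
          2 * ((Fintype.card V : ℝ) / (G.edgeFinset.card : ℝ) - 1)) ↔
        (IsRegularGraph G ∨ IsSemiRegularBipartite G))) ∧
    ((∀ x y : V, G.Adj x y →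
        1 / (G.degree x : ℝ) + 1 / (G.degree y : ℝ) =
          (Fintype.card V : ℝ) / (G.edgeFinset.card : ℝ)) ↔
      (IsRegularGraph G ∨ IsSemiRegularBipartite G)) := by
  classical
  have hkey := key (G := G) hconn hE
  refine ⟨?_, hkey⟩
  intro c hc
  rw [← hkey]
  obtain ⟨e0, he0⟩ := hE
  have hm : 0 < G.edgeFinset.card := Finset.card_pos.mpr ⟨e0, he0⟩
  have hmR : (0:ℝ) < (G.edgeFinset.card : ℝ) := by exact_mod_cast hm
  obtain ⟨x0, y0, hxy0⟩ : ∃ x y, G.Adj x y := by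
    rw [SimpleGraph.mem_edgeFinset] at he0
    induction e0 with
    | _ x y => exact ⟨x, y, he0⟩
  have h2 : 1 < Fintype.card V :=
    Fintype.one_lt_card_iff_nontrivial.mpr ⟨x0, y0, hxy0.ne⟩
  have dposR : ∀ v, (0:ℝ) < (G.degree v : ℝ) := fun v => by
    exact_mod_cast deg_pos hconn h2 v
  have hvm : ∀ z, vm G (fun _ => c) z = (G.degree z : ℝ) * c := by
    intro z
    simp [vm, Finset.sum_const, nsmul_eq_mul]
  have halg : ∀ x y : V, G.Adj x y →
      ((2 * c * (1 / vm G (fun _ => c) x + 1 / vm G (fun _ => c) y) - 2 =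
        2 * ((Fintype.card V : ℝ) / (G.edgeFinset.card : ℝ) - 1)) ↔
      (1 / (G.degree x : ℝ) + 1 / (G.degree y : ℝ) =
        (Fintype.card V : ℝ) / (G.edgeFinset.card : ℝ))) := by
    intro x y hxy
    rw [hvm, hvm]
    have hdx := dposR x
    have hdy := dposR y
    have hsimp : 2 * c * (1 / ((G.degree x : ℝ) * c) + 1 / ((G.degree y : ℝ) * c)) =
        2 * (1 / (G.degree x : ℝ) + 1 / (G.degree y : ℝ)) := by
      field_simp
    rw [hsimp]
    constructor
    · intro h; linarith
    · intro h; linarith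
  constructor
  · intro H x y hxy
    have h := H s(x, y) (by rw [SimpleGraph.mem_edgeFinset]; exact hxy)
    simp only [edgeKappa, Sym2.lift_mk] at h
    exact (halg x y hxy).mp h
  · intro H e he
    induction e with
    | _ x y =>
      rw [SimpleGraph.mem_edgeFinset, SimpleGraph.mem_edgeSet] at he
      simp only [edgeKappa, Sym2.lift_mk]
      exact (halg x y he).mpr (H x y he)
end

section
/- Let G=(V,E) be a finite connected simple graph with at least one edge. There exists a weight ω on G (i.e., ω_e > 0 for all e) with ω_xy·(1/m(x)+1/m(y)) = |V|/|E| for every edge {x,y} if and only if there exists a function m:V→ℝ with m(x)>0 for all x such that Σ_{y∼x} m(y)/(m(x)+m(y)) = |E|/|V| for every vertex x. Moreover, given such a function m, the weight defined by ω_xy = (|V|/|E|)·m(x)m(y)/(m(x)+m(y)) satisfies ω_xy·(1/m̃(x)+1/m̃(y)) = |V|/|E| for every edge {x,y}, where m̃(x) = Σ_{y∼x} ω_xy. -/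
open Finset

variable {V : Type*} [Fintype V] [DecidableEq V]

/-- The weight `ω_{xy} = (|V|/|E|)·m(x)m(y)/(m(x)+m(y))` built from a vertex function `m`. -/
noncomputable def mWeight (G : SimpleGraph V) [DecidableRel G.Adj] (m : V → ℝ) :
    Sym2 V → ℝ :=
  Sym2.lift ⟨fun x y =>
    ((Fintype.card V : ℝ) / (G.edgeFinset.card : ℝ)) * (m x * m y / (m x + m y)), by
    intro x y
    dsimp only
    ring⟩


omit [DecidableEq V] in
lemma mWeight_apply (G : SimpleGraph V) [DecidableRel G.Adj] (m : V → ℝ) (x y : V) :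
    mWeight G m s(x, y) =
      ((Fintype.card V : ℝ) / (G.edgeFinset.card : ℝ)) * (m x * m y / (m x + m y)) := rfl

private lemma alg1 (a b mx S : ℝ) (ha : a ≠ 0) (hb : b ≠ 0) (hS : S = b / a) :
    a / b * mx * S = mx := by subst hS; field_simp

private lemma alg2 (a b mx my : ℝ) (ha : a ≠ 0) (hb : b ≠ 0) (hx : 0 < mx) (hy : 0 < my) :
    a / b * (mx * my / (mx + my)) * (1 / mx + 1 / my) = a / b := by
  have hx0 : mx ≠ 0 := ne_of_gt hx
  have hy0 : my ≠ 0 := ne_of_gt hy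
  have hxy0 : mx + my ≠ 0 := ne_of_gt (add_pos hx hy)
  field_simp
  ring

private lemma alg3 (a b mx my wxy : ℝ) (ha : 0 < a) (hb : 0 < b) (hx : 0 < mx) (hy : 0 < my)
    (h : wxy * (1 / mx + 1 / my) = a / b) :
    my / (mx + my) = wxy / (a / b * mx) := by
  have hx0 : mx ≠ 0 := ne_of_gt hx
  have hy0 : my ≠ 0 := ne_of_gt hy
  have hxy0 : mx + my ≠ 0 := ne_of_gt (add_pos hx hy)
  have hc0 : a / b ≠ 0 := ne_of_gt (div_pos ha hb)
  have h2 : wxy * (my + mx) = a / b * (mx * my) := by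
    field_simp at h
    rw [div_mul_eq_mul_div, eq_div_iff (ne_of_gt hb)]
    linarith [h]
  rw [div_eq_div_iff hxy0 (mul_ne_zero hc0 hx0)]
  linear_combination -h2

private lemma alg4 (a b Mx : ℝ) (ha : a ≠ 0) (hb : b ≠ 0) (hx : Mx ≠ 0) :
    Mx / (a / b * Mx) = b / a := by
  field_simp

/-- A weight with `ω_{xy}(1/m̃(x)+1/m̃(y)) = |V|/|E|` on every edge exists iff there is a
positive vertex function `m` with `Σ_{y∼x} m(y)/(m(x)+m(y)) = |E|/|V|` at every vertex;
moreover, any such `m` produces such a weight via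
`ω_{xy} = (|V|/|E|)·m(x)m(y)/(m(x)+m(y))`. -/
theorem constant_curvature_weight_iff_vertex_system (G : SimpleGraph V) [DecidableRel G.Adj]
    (hconn : G.Connected) (hE : G.edgeFinset.Nonempty) :
    ((∃ w : Sym2 V → ℝ, (∀ e ∈ G.edgeFinset, 0 < w e) ∧
        ∀ x y : V, G.Adj x y →
          w s(x, y) * (1 / vm G w x + 1 / vm G w y) =
            (Fintype.card V : ℝ) / (G.edgeFinset.card : ℝ)) ↔
      (∃ m : V → ℝ, (∀ x : V, 0 < m x) ∧
        ∀ x : V, ∑ y ∈ G.neighborFinset x, m y / (m x + m y) =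
          (G.edgeFinset.card : ℝ) / (Fintype.card V : ℝ))) ∧
    (∀ m : V → ℝ, (∀ x : V, 0 < m x) →
      (∀ x : V, ∑ y ∈ G.neighborFinset x, m y / (m x + m y) =
        (G.edgeFinset.card : ℝ) / (Fintype.card V : ℝ)) →
      ∀ x y : V, G.Adj x y →
        mWeight G m s(x, y) *
            (1 / vm G (mWeight G m) x + 1 / vm G (mWeight G m) y) =
          (Fintype.card V : ℝ) / (G.edgeFinset.card : ℝ)) := by
  obtain ⟨e₀, he₀⟩ := hE
  have hcard : 1 < Fintype.card V := by
    induction e₀ with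
    | h a b =>
      rw [SimpleGraph.mem_edgeFinset, SimpleGraph.mem_edgeSet] at he₀
      exact Fintype.one_lt_card_iff.2 ⟨a, b, he₀.ne⟩
  have hVpos : (0 : ℝ) < (Fintype.card V : ℝ) := by positivity
  have hV0 : (Fintype.card V : ℝ) ≠ 0 := ne_of_gt hVpos
  have hEpos : (0 : ℝ) < (G.edgeFinset.card : ℝ) := by
    have : 0 < G.edgeFinset.card := Finset.card_pos.2 ⟨e₀, he₀⟩
    exact_mod_cast this
  have hE0 : (G.edgeFinset.card : ℝ) ≠ 0 := ne_of_gt hEpos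
  have hnbr : ∀ x : V, (G.neighborFinset x).Nonempty := by
    intro x
    obtain ⟨y, hy⟩ := Fintype.exists_ne_of_one_lt_card hcard x
    obtain ⟨p⟩ := hconn.preconnected x y
    exact ⟨p.getVert 1, by
      rw [SimpleGraph.mem_neighborFinset]
      exact p.adj_snd (SimpleGraph.Walk.not_nil_of_ne hy.symm)⟩
  have key : ∀ m : V → ℝ, (∀ x : V, 0 < m x) →
      (∀ x : V, ∑ y ∈ G.neighborFinset x, m y / (m x + m y) =
        (G.edgeFinset.card : ℝ) / (Fintype.card V : ℝ)) →
      ∀ x : V, vm G (mWeight G m) x = m x := by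
    intro m hm hsum x
    have h1 : vm G (mWeight G m) x
        = ((Fintype.card V : ℝ) / (G.edgeFinset.card : ℝ) * m x) *
            ∑ y ∈ G.neighborFinset x, m y / (m x + m y) := by
      rw [Finset.mul_sum]
      unfold vm
      refine Finset.sum_congr rfl fun y _ => ?_
      rw [mWeight_apply]
      ring
    rw [h1]
    exact alg1 _ _ _ _ hV0 hE0 (hsum x)
  have moreover : ∀ m : V → ℝ, (∀ x : V, 0 < m x) →
      (∀ x : V, ∑ y ∈ G.neighborFinset x, m y / (m x + m y) =
        (G.edgeFinset.card : ℝ) / (Fintype.card V : ℝ)) →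
      ∀ x y : V, G.Adj x y →
        mWeight G m s(x, y) *
            (1 / vm G (mWeight G m) x + 1 / vm G (mWeight G m) y) =
          (Fintype.card V : ℝ) / (G.edgeFinset.card : ℝ) := by
    intro m hm hsum x y _
    rw [key m hm hsum x, key m hm hsum y, mWeight_apply]
    exact alg2 _ _ _ _ hV0 hE0 (hm x) (hm y)
  refine ⟨⟨?_, ?_⟩, moreover⟩
  · rintro ⟨w, hwpos, hw⟩
    have hMpos : ∀ x : V, 0 < vm G w x := by
      intro x
      apply Finset.sum_pos _ (hnbr x)
      intro y hy
      rw [SimpleGraph.mem_neighborFinset] at hy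
      exact hwpos _ (by rwa [SimpleGraph.mem_edgeFinset, SimpleGraph.mem_edgeSet])
    refine ⟨vm G w, hMpos, fun x => ?_⟩
    have hterm : ∀ y ∈ G.neighborFinset x,
        vm G w y / (vm G w x + vm G w y) =
          w s(x, y) / ((Fintype.card V : ℝ) / (G.edgeFinset.card : ℝ) * vm G w x) := by
      intro y hy
      rw [SimpleGraph.mem_neighborFinset] at hy
      exact alg3 _ _ _ _ _ hVpos hEpos (hMpos x) (hMpos y) (hw x y hy)
    rw [Finset.sum_congr rfl hterm, ← Finset.sum_div]
    have hsumw : ∑ y ∈ G.neighborFinset x, w s(x, y) = vm G w x := rfl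
    rw [hsumw]
    exact alg4 _ _ _ hV0 hE0 (ne_of_gt (hMpos x))
  · rintro ⟨m, hm, hsum⟩
    refine ⟨mWeight G m, ?_, moreover m hm hsum⟩
    intro e he
    induction e with
    | h a b =>
      rw [SimpleGraph.mem_edgeFinset, SimpleGraph.mem_edgeSet] at he
      rw [mWeight_apply]
      have ha := hm a
      have hb := hm b
      exact mul_pos (div_pos hVpos hEpos) (by positivity)
end

section
/- Let G=(V,E) be a finite connected simple graph with at least one edge. For x∈V set α(x) = |E|/|V| − d(x)/2, and for v:V→ℝ define ρ(v) = (1/2)·Σ_{{x,y}∈E} |v(x)−v(y)| + Σ_{x∈V} α(x)·v(x). Then: (i) for every subset Ω ⊆ V, ρ(1_Ω) = |Ω|·|E|/|V| − |E(Ω)|, where 1_Ω is the indicator function of Ω; and (ii) if |V|·|E(Ω)| < |E|·|Ω| for every nonempty proper subset Ω ⊊ V, then ρ(v) > 0 for every nonconstant function v:V→ℝ. -/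
open Finset

variable {V : Type*} [Fintype V] [DecidableEq V]

/-- The functional `ρ(v) = (1/2)·Σ_{{x,y}∈E} |v(x)−v(y)| + Σ_x α(x)v(x)` with
`α(x) = |E|/|V| − d(x)/2`. -/
noncomputable def rhoFun (G : SimpleGraph V) [DecidableRel G.Adj] (v : V → ℝ) : ℝ :=
  (1 / 2) * ∑ e ∈ G.edgeFinset,
      Sym2.lift ⟨fun x y => |v x - v y|, by
        intro x y
        dsimp only
        rw [abs_sub_comm]⟩ e +
    ∑ x : V, ((G.edgeFinset.card : ℝ) / (Fintype.card V : ℝ) - (G.degree x : ℝ) / 2) * v x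

namespace RhoAux

variable (G : SimpleGraph V) [DecidableRel G.Adj]

noncomputable instance : ∀ (x : V) (e : Sym2 V), Decidable (x ∈ e) := fun _ _ => Classical.dec _
noncomputable instance (Ω : Finset V) : DecidablePred (fun e : Sym2 V => ∀ x ∈ e, x ∈ Ω) :=
  fun _ => Classical.dec _

lemma sum_alpha (hV : (Fintype.card V : ℝ) ≠ 0) :
    ∑ x : V, ((G.edgeFinset.card : ℝ) / (Fintype.card V : ℝ) - (G.degree x : ℝ) / 2) = 0 := by
  have h := G.sum_degrees_eq_twice_card_edges
  have h' : ∑ x : V, (G.degree x : ℝ) = 2 * G.edgeFinset.card := by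
    exact_mod_cast congrArg (Nat.cast (R := ℝ)) h
  rw [Finset.sum_sub_distrib, Finset.sum_const, Finset.card_univ, ← Finset.sum_div, h']
  field_simp
  rw [nsmul_eq_mul, mul_div_cancel₀ _ hV, sub_self]

lemma rho_const (hV : (Fintype.card V : ℝ) ≠ 0) (t : ℝ) : rhoFun G (fun _ => t) = 0 := by
  unfold rhoFun
  have h1 : ∀ e ∈ G.edgeFinset,
      (Sym2.lift ⟨fun x y => |(fun _ : V => t) x - (fun _ : V => t) y|, by
        intro x y; exact abs_sub_comm _ _⟩) e = 0 := by
    intro e _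
    induction e using Sym2.ind with
    | _ a b => simp [Sym2.lift_mk]
  rw [Finset.sum_congr rfl h1, Finset.sum_const, smul_zero, mul_zero, zero_add]
  rw [← Finset.sum_mul, sum_alpha G hV, zero_mul]

lemma sum_count (Ω : Finset V) :
    ∑ e ∈ G.edgeFinset, ((Ω.filter (· ∈ e)).card : ℝ) = ∑ x ∈ Ω, (G.degree x : ℝ) := by
  have h : ∀ e : Sym2 V, ((Ω.filter (· ∈ e)).card : ℝ)
      = ∑ x ∈ Ω, (if x ∈ e then (1:ℝ) else 0) := by
    intro e; rw [Finset.sum_boole]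
  simp_rw [h]
  rw [Finset.sum_comm]
  refine Finset.sum_congr rfl fun x _ => ?_
  rw [Finset.sum_boole]
  congr 1
  rw [show G.edgeFinset.filter (fun e => x ∈ e) = G.incidenceFinset x by
    ext e; simp [SimpleGraph.mem_incidenceFinset, SimpleGraph.incidenceSet,
      SimpleGraph.mem_edgeFinset]]
  exact_mod_cast G.card_incidenceFinset_eq_degree x

lemma count_edge (Ω : Finset V) (a b : V) (hab : a ≠ b) :
    ((Ω.filter (· ∈ s(a,b))).card : ℝ)
      = (if a ∈ Ω then (1:ℝ) else 0) + (if b ∈ Ω then (1:ℝ) else 0) := by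
  have h : Ω.filter (· ∈ s(a,b)) = Ω.filter (· = a) ∪ Ω.filter (· = b) := by
    rw [← Finset.filter_or]; apply Finset.filter_congr; intro x _; simp [Sym2.mem_iff]
  rw [h, Finset.card_union_of_disjoint]
  · rw [Finset.filter_eq', Finset.filter_eq']
    by_cases ha : a ∈ Ω <;> by_cases hb : b ∈ Ω <;> simp [ha, hb] <;> norm_num
  · simp only [Finset.disjoint_filter]
    rintro x _ rfl rfl; exact hab rfl

lemma rho_indicator (Ω : Finset V) :
    rhoFun G (fun x => if x ∈ Ω then (1:ℝ) else 0) =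
      (Ω.card : ℝ) * (G.edgeFinset.card : ℝ) / (Fintype.card V : ℝ) -
        ({e ∈ G.edgeSet | ∀ v ∈ e, v ∈ Ω}.ncard : ℝ) := by
  set F : Finset (Sym2 V) := G.edgeFinset.filter (fun e => ∀ x ∈ e, x ∈ Ω) with hF
  have hset : {e ∈ G.edgeSet | ∀ v ∈ e, v ∈ Ω} = ↑F := by
    ext e; simp [hF, SimpleGraph.mem_edgeFinset]
  have hncard : ({e ∈ G.edgeSet | ∀ v ∈ e, v ∈ Ω}.ncard : ℝ) = (F.card : ℝ) := by
    rw [hset, Set.ncard_coe_finset]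
  have hedge : ∑ e ∈ G.edgeFinset,
      (Sym2.lift ⟨fun x y => |(if x ∈ Ω then (1:ℝ) else 0) - (if y ∈ Ω then (1:ℝ) else 0)|, by
        intro x y; dsimp only; rw [abs_sub_comm]⟩) e
      = ∑ x ∈ Ω, (G.degree x : ℝ) - 2 * (F.card : ℝ) := by
    have hpt : ∀ e ∈ G.edgeFinset,
        (Sym2.lift ⟨fun x y => |(if x ∈ Ω then (1:ℝ) else 0) - (if y ∈ Ω then (1:ℝ) else 0)|, by
          intro x y; dsimp only; rw [abs_sub_comm]⟩) e
        = ((Ω.filter (· ∈ e)).card : ℝ) - 2 * (if (∀ x ∈ e, x ∈ Ω) then (1:ℝ) else 0) := by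
      intro e he
      rw [SimpleGraph.mem_edgeFinset] at he
      revert he
      induction e using Sym2.ind with
      | _ a b =>
        intro he
        have hab : a ≠ b := (G.mem_edgeSet.mp he).ne
        rw [Sym2.lift_mk, count_edge Ω a b hab]
        have hP : (∀ x ∈ s(a,b), x ∈ Ω) ↔ (a ∈ Ω ∧ b ∈ Ω) := by
          simp [Sym2.mem_iff, forall_eq_or_imp]
        by_cases ha : a ∈ Ω <;> by_cases hb : b ∈ Ω <;>
          simp [ha, hb, hP] <;> norm_num
    rw [Finset.sum_congr rfl hpt, Finset.sum_sub_distrib, sum_count, ← Finset.mul_sum,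
      Finset.sum_boole, hF]
  have hlin : ∑ x : V, ((G.edgeFinset.card : ℝ) / (Fintype.card V : ℝ) - (G.degree x : ℝ) / 2)
        * (if x ∈ Ω then (1:ℝ) else 0)
      = (Ω.card : ℝ) * ((G.edgeFinset.card : ℝ) / (Fintype.card V : ℝ))
        - (1/2) * ∑ x ∈ Ω, (G.degree x : ℝ) := by
    rw [show ∀ f : V → ℝ, ∑ x : V, f x * (if x ∈ Ω then (1:ℝ) else 0)
        = ∑ x ∈ Ω, f x from fun f => by
      simp_rw [mul_ite, mul_one, mul_zero]
      rw [Finset.sum_ite_mem, Finset.univ_inter]]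
    rw [Finset.sum_sub_distrib, Finset.sum_const, nsmul_eq_mul, ← Finset.sum_div]
    ring
  unfold rhoFun
  rw [hedge, hlin, hncard]
  ring

lemma rho_add_indicator (v' : V → ℝ) (c : ℝ) (hc : 0 ≤ c) (Ω : Finset V)
    (hmono : ∀ x ∈ Ω, ∀ y ∉ Ω, v' y ≤ v' x) :
    rhoFun G (fun x => v' x + c * (if x ∈ Ω then (1:ℝ) else 0))
      = rhoFun G v' + c * rhoFun G (fun x => if x ∈ Ω then (1:ℝ) else 0) := by
  unfold rhoFun
  have h1 : ∀ e ∈ G.edgeFinset,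
      (Sym2.lift ⟨fun x y => |(v' x + c * (if x ∈ Ω then (1:ℝ) else 0))
          - (v' y + c * (if y ∈ Ω then (1:ℝ) else 0))|, by
        intro x y; dsimp only; rw [abs_sub_comm]⟩) e
      = (Sym2.lift ⟨fun x y => |v' x - v' y|, by
          intro x y; dsimp only; rw [abs_sub_comm]⟩) e
        + c * (Sym2.lift ⟨fun x y => |(if x ∈ Ω then (1:ℝ) else 0)
            - (if y ∈ Ω then (1:ℝ) else 0)|, by
          intro x y; dsimp only; rw [abs_sub_comm]⟩) e := by
    intro e _
    induction e using Sym2.ind with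
    | _ a b =>
      simp only [Sym2.lift_mk]
      by_cases ha : a ∈ Ω <;> by_cases hb : b ∈ Ω
      · simp [ha, hb]
      · have h2 : v' b ≤ v' a := hmono a ha b hb
        rw [if_pos ha, if_neg hb, show |(1:ℝ) - 0| = 1 by norm_num,
          abs_of_nonneg (show (0:ℝ) ≤ v' a - v' b by linarith),
          abs_of_nonneg (show (0:ℝ) ≤ v' a + c * 1 - (v' b + c * 0) by linarith)]
        ring
      · have h2 : v' a ≤ v' b := hmono b hb a ha
        rw [if_neg ha, if_pos hb, show |(0:ℝ) - 1| = 1 by norm_num,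
          abs_of_nonpos (show v' a - v' b ≤ 0 by linarith),
          abs_of_nonpos (show v' a + c * 0 - (v' b + c * 1) ≤ 0 by linarith)]
        ring
      · simp [ha, hb]
  rw [Finset.sum_congr rfl h1, Finset.sum_add_distrib, ← Finset.mul_sum]
  have h3 : ∀ x : V, ((G.edgeFinset.card : ℝ) / (Fintype.card V : ℝ) - (G.degree x : ℝ) / 2)
      * (v' x + c * (if x ∈ Ω then (1:ℝ) else 0))
      = ((G.edgeFinset.card : ℝ) / (Fintype.card V : ℝ) - (G.degree x : ℝ) / 2) * v' x
        + c * (((G.edgeFinset.card : ℝ) / (Fintype.card V : ℝ) - (G.degree x : ℝ) / 2)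
          * (if x ∈ Ω then (1:ℝ) else 0)) := fun x => by ring
  simp_rw [h3]
  rw [Finset.sum_add_distrib, ← Finset.mul_sum]
  ring

lemma rho_pos (hV : (Fintype.card V : ℝ) ≠ 0)
    (hpos : ∀ Ω : Finset V, Ω.Nonempty → Ω ≠ univ →
      0 < rhoFun G (fun x => if x ∈ Ω then (1:ℝ) else 0)) :
    ∀ n (v : V → ℝ), (Finset.image v univ).card ≤ n → 2 ≤ (Finset.image v univ).card →
      0 < rhoFun G v := by
  intro n
  induction n with
  | zero => intro v h1 h2; omega
  | succ n IH =>
    intro v hn h2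
    classical
    haveI : Nonempty V := Fintype.card_pos_iff.mp (Nat.pos_of_ne_zero (Nat.cast_ne_zero.mp hV))
    have hne : (Finset.image v Finset.univ).Nonempty := Finset.card_pos.mp (by omega)
    set S := Finset.image v Finset.univ with hS
    set M := S.max' hne with hM
    have hMS : M ∈ S := S.max'_mem hne
    set Ω : Finset V := Finset.univ.filter (fun x => v x = M) with hΩ
    have hΩne : Ω.Nonempty := by
      obtain ⟨x, _, hx⟩ := Finset.mem_image.mp hMS
      exact ⟨x, by simp [hΩ, hx]⟩
    have hSe : (S.erase M).Nonempty := by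
      rw [← Finset.card_pos, Finset.card_erase_of_mem hMS]; omega
    set m2 := (S.erase M).max' hSe with hm2
    have hm2S : m2 ∈ S.erase M := (S.erase M).max'_mem hSe
    have hm2lt : m2 < M :=
      lt_of_le_of_ne (S.le_max' m2 (Finset.mem_of_mem_erase hm2S))
        (Finset.ne_of_mem_erase hm2S)
    have hΩprop : Ω ≠ Finset.univ := by
      obtain ⟨y, _, hy⟩ := Finset.mem_image.mp (Finset.mem_of_mem_erase hm2S)
      intro hctr
      have : y ∈ Ω := hctr ▸ Finset.mem_univ y
      rw [hΩ, Finset.mem_filter] at this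
      exact absurd (hy.symm.trans this.2) (Finset.ne_of_mem_erase hm2S)
    set c := M - m2 with hc
    have hcpos : 0 < c := by simp [hc]; linarith
    set v' : V → ℝ := fun x => if x ∈ Ω then m2 else v x with hv'
    have hveq : (fun x => v' x + c * (if x ∈ Ω then (1:ℝ) else 0)) = v := by
      funext x
      by_cases hx : x ∈ Ω
      · have : v x = M := (Finset.mem_filter.mp hx).2
        simp [hv', hx, hc, this]
      · simp [hv', hx]
    have hvleM : ∀ x, v x ∈ S := fun x => Finset.mem_image.mpr ⟨x, Finset.mem_univ x, rfl⟩
    have hmono : ∀ x ∈ Ω, ∀ y ∉ Ω, v' y ≤ v' x := by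
      intro x hx y hy
      have hyM : v y ≠ M := fun h => hy (Finset.mem_filter.mpr ⟨Finset.mem_univ y, h⟩)
      have : v y ∈ S.erase M := Finset.mem_erase.mpr ⟨hyM, hvleM y⟩
      have h3 : v y ≤ m2 := (S.erase M).le_max' _ this
      simp [hv', hx, hy, h3]
    have hadd := rho_add_indicator G v' c hcpos.le Ω hmono
    rw [hveq] at hadd
    have hposΩ := hpos Ω hΩne hΩprop
    have himg : Finset.image v' Finset.univ = S.erase M := by
      ext t
      simp only [Finset.mem_image, Finset.mem_univ, true_and]
      constructor
      · rintro ⟨x, rfl⟩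
        by_cases hx : x ∈ Ω
        · simpa [hv', hx] using hm2S
        · have hxM : v x ≠ M := fun h => hx (Finset.mem_filter.mpr ⟨Finset.mem_univ x, h⟩)
          simp only [hv', if_neg hx]
          exact Finset.mem_erase.mpr ⟨hxM, hvleM x⟩
      · intro ht
        obtain ⟨x, _, hx⟩ := Finset.mem_image.mp (Finset.mem_of_mem_erase ht)
        have hxΩ : x ∉ Ω := by
          intro hctr
          have : v x = M := (Finset.mem_filter.mp hctr).2
          exact (Finset.ne_of_mem_erase ht) (hx.symm.trans this)
        exact ⟨x, by simp [hv', hxΩ, hx]⟩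
    by_cases hcase : 2 ≤ (Finset.image v' Finset.univ).card
    · have hcard : (Finset.image v' Finset.univ).card ≤ n := by
        rw [himg, Finset.card_erase_of_mem hMS]; omega
      have := IH v' hcard hcase
      nlinarith
    · have h1 : (Finset.image v' Finset.univ).card = 1 := by
        have hne' : (Finset.image v' Finset.univ).Nonempty :=
          ⟨v' (Classical.arbitrary V), Finset.mem_image.mpr ⟨_, Finset.mem_univ _, rfl⟩⟩
        have := Finset.card_pos.mpr hne'
        omega
      obtain ⟨t, ht⟩ := Finset.card_eq_one.mp h1
      have hvt : v' = fun _ => t := by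
        funext x
        have hx : v' x ∈ Finset.image v' Finset.univ :=
          Finset.mem_image.mpr ⟨x, Finset.mem_univ x, rfl⟩
        rw [ht, Finset.mem_singleton] at hx
        exact hx
      rw [hvt, rho_const G hV] at hadd
      rw [hadd]
      nlinarith

end RhoAux

/-- (i) `ρ(1_Ω) = |Ω|·|E|/|V| − |E(Ω)|` for every `Ω ⊆ V`; (ii) if
`|V|·|E(Ω)| < |E|·|Ω|` for every nonempty proper `Ω ⊊ V`, then `ρ(v) > 0` for every
nonconstant `v`. -/
theorem rho_indicator_and_positivity (G : SimpleGraph V) [DecidableRel G.Adj]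
    (hconn : G.Connected) (hE : G.edgeFinset.Nonempty) :
    (∀ Ω : Finset V,
      rhoFun G (fun x => if x ∈ Ω then (1 : ℝ) else 0) =
        (Ω.card : ℝ) * (G.edgeFinset.card : ℝ) / (Fintype.card V : ℝ) -
          ({e ∈ G.edgeSet | ∀ v ∈ e, v ∈ Ω}.ncard : ℝ)) ∧
    ((∀ Ω : Set V, Ω.Nonempty → Ω ≠ Set.univ →
        Fintype.card V * {e ∈ G.edgeSet | ∀ v ∈ e, v ∈ Ω}.ncard <
          G.edgeFinset.card * Ω.ncard) →
      ∀ v : V → ℝ, (∃ a b : V, v a ≠ v b) → 0 < rhoFun G v) := by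
  constructor
  · exact fun Ω => RhoAux.rho_indicator G Ω
  · intro h v hv
    classical
    haveI : Nonempty V := hconn.nonempty
    have hVpos : (0:ℝ) < Fintype.card V := by exact_mod_cast Fintype.card_pos
    have hV : (Fintype.card V : ℝ) ≠ 0 := ne_of_gt hVpos
    have hpos : ∀ Ω : Finset V, Ω.Nonempty → Ω ≠ univ →
        0 < rhoFun G (fun x => if x ∈ Ω then (1:ℝ) else 0) := by
      intro Ω hne hprop
      have h1 := h (↑Ω) (Finset.coe_nonempty.mpr hne) (by
        intro hctr
        exact hprop (Finset.coe_injective (by rw [hctr, Finset.coe_univ])))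
      simp only [Finset.mem_coe, Set.ncard_coe_finset] at h1
      rw [RhoAux.rho_indicator G Ω]
      have h2 : ((Fintype.card V : ℝ)) * ({e ∈ G.edgeSet | ∀ v ∈ e, v ∈ Ω}.ncard : ℝ)
          < (G.edgeFinset.card : ℝ) * Ω.card := by exact_mod_cast h1
      rw [sub_pos, lt_div_iff₀ hVpos]
      nlinarith
    obtain ⟨a, b, hab⟩ := hv
    have h2 : 2 ≤ (Finset.image v univ).card :=
      Finset.one_lt_card.mpr ⟨v a, Finset.mem_image_of_mem v (mem_univ a),
        v b, Finset.mem_image_of_mem v (mem_univ b), hab⟩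
    exact RhoAux.rho_pos G hV hpos _ v le_rfl h2
end

section
/- Let G=(V,E) be a finite connected simple graph with girth at least 6 and let κ*:E→ℝ satisfy Σ_{e∈E} κ*_e = 2(|V| − |E|). If ω:[0,∞)→ℝ^E is a solution of the prescribed-curvature Ricci flow with positive initial value, then the product of the weights is conserved: Π_{e∈E} ω_e(t) = Π_{e∈E} ω_e(0) for all t ≥ 0 (equivalently, Σ_{e∈E} ln ω_e(t) is constant in t). -/
open Finset

variable {V : Type*} [Fintype V] [DecidableEq V]

/-- Summing a symmetrized function over the edges equals summing over darts. -/
lemma sum_edge_lift (G : SimpleGraph V) [DecidableRel G.Adj] (h : V → V → ℝ)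
    (hs : ∀ x y, h x y + h y x = h y x + h x y) :
    ∑ e ∈ G.edgeFinset, Sym2.lift ⟨fun x y => h x y + h y x, hs⟩ e
      = ∑ d : G.Dart, h d.fst d.snd := by
  rw [← Finset.sum_fiberwise_of_maps_to (g := SimpleGraph.Dart.edge)
    (t := G.edgeFinset) (fun d _ => by rw [SimpleGraph.mem_edgeFinset]; exact d.edge_mem)]
  refine Finset.sum_congr rfl fun e he => ?_
  rw [SimpleGraph.mem_edgeFinset] at he
  induction e with
  | _ x y =>
    have hadj : G.Adj x y := he
    let d : G.Dart := ⟨(x, y), hadj⟩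
    have hfib : (Finset.univ.filter fun d' : G.Dart => d'.edge = s(x, y)) = {d, d.symm} := by
      exact d.edge_fiber
    rw [hfib, Finset.sum_insert (by simpa [Finset.mem_singleton] using d.symm_ne.symm)]
    simp [d, SimpleGraph.Dart.symm]

/-- Summing over darts equals summing over vertices and their neighbors. -/
lemma sum_darts_eq (G : SimpleGraph V) [DecidableRel G.Adj] (h : V → V → ℝ) :
    ∑ d : G.Dart, h d.fst d.snd = ∑ v, ∑ y ∈ G.neighborFinset v, h v y := by
  rw [← Finset.sum_fiberwise_of_maps_to (g := fun d : G.Dart => d.fst)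
    (t := Finset.univ) (fun d _ => Finset.mem_univ _)]
  refine Finset.sum_congr rfl fun v _ => ?_
  have : (Finset.univ.filter fun d : G.Dart => d.fst = v)
      = Finset.univ.image (G.dartOfNeighborSet v) := by
    simpa using G.dart_fst_fiber v
  rw [this, Finset.sum_image (fun a _ b _ hab => G.dartOfNeighborSet_injective v hab)]
  rw [show (∑ y ∈ G.neighborFinset v, h v y) = ∑ y : G.neighborSet v, h v y by
    rw [SimpleGraph.neighborFinset_def]; exact (Finset.sum_set_coe _).symm]
  rfl

/-- The Gauss–Bonnet-type identity: the total curvature equals `2(|V| - |E|)`. -/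
lemma kappa_sum (G : SimpleGraph V) [DecidableRel G.Adj] (w : Sym2 V → ℝ)
    (hm : ∀ v, vm G w v ≠ 0) :
    ∑ e ∈ G.edgeFinset, edgeKappa G w e =
      2 * ((Fintype.card V : ℝ) - (G.edgeFinset.card : ℝ)) := by
  set h : V → V → ℝ := fun x y => 2 * w s(x, y) / vm G w x with hh
  have hs : ∀ x y, h x y + h y x = h y x + h x y := fun x y => add_comm _ _
  have hpt : ∀ e ∈ G.edgeFinset,
      edgeKappa G w e = Sym2.lift ⟨fun x y => h x y + h y x, hs⟩ e - 2 := by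
    intro e _
    induction e with
    | _ x y =>
      simp only [edgeKappa, Sym2.lift_mk, hh]
      rw [show s(y, x) = s(x, y) from Sym2.eq_swap]
      ring
  rw [Finset.sum_congr rfl hpt, Finset.sum_sub_distrib, sum_edge_lift, sum_darts_eq]
  have hv : ∀ v : V, ∑ y ∈ G.neighborFinset v, h v y = 2 := by
    intro v
    have : ∑ y ∈ G.neighborFinset v, h v y
        = (∑ y ∈ G.neighborFinset v, w s(v, y)) * (2 / vm G w v) := by
      rw [Finset.sum_mul]
      exact Finset.sum_congr rfl fun y _ => by rw [hh]; ring
    rw [this, ← vm]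
    field_simp [hm v]
  rw [Finset.sum_congr rfl fun v _ => hv v]
  simp [mul_comm]
  ring

/-- If `Σ_e κ*_e = 2(|V| − |E|)`, then the product of the weights is conserved along the
prescribed-curvature Ricci flow. -/
theorem ricci_flow_product_conserved (G : SimpleGraph V) [DecidableRel G.Adj]
    (hconn : G.Connected) (hgirth : 6 ≤ G.egirth) (κs : Sym2 V → ℝ)
    (hsum : ∑ e ∈ G.edgeFinset, κs e =
      2 * ((Fintype.card V : ℝ) - (G.edgeFinset.card : ℝ)))
    (ω : ℝ → Sym2 V → ℝ)
    (hpos : ∀ t ≥ (0 : ℝ), ∀ e ∈ G.edgeFinset, 0 < ω t e)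
    (hflow : ∀ t ≥ (0 : ℝ), ∀ e ∈ G.edgeFinset,
      HasDerivWithinAt (fun s => ω s e)
        (-(edgeKappa G (ω t) e - κs e) * ω t e) (Set.Ici 0) t) :
    ∀ t ≥ (0 : ℝ), ∏ e ∈ G.edgeFinset, ω t e = ∏ e ∈ G.edgeFinset, ω 0 e := by
  by_cases hE : G.edgeFinset = ∅
  · intro t _
    simp [hE]
  -- every vertex has a neighbor
  have hnb : ∀ v : V, ∃ y, G.Adj v y := by
    intro v
    obtain ⟨e0, he0⟩ := Finset.nonempty_iff_ne_empty.mpr hE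
    rw [SimpleGraph.mem_edgeFinset] at he0
    induction e0 with
    | _ x y =>
      obtain ⟨p⟩ := hconn v x
      cases p with
      | nil => exact ⟨y, he0⟩
      | cons hadj _ => exact ⟨_, hadj⟩
  have hvm : ∀ t ≥ (0 : ℝ), ∀ v : V, vm G (ω t) v ≠ 0 := by
    intro t ht v
    obtain ⟨y, hy⟩ := hnb v
    refine ne_of_gt (Finset.sum_pos (fun z hz => ?_) ⟨y, (SimpleGraph.mem_neighborFinset _ _ _).mpr hy⟩)
    rw [SimpleGraph.mem_neighborFinset] at hz
    exact hpos t ht _ ((SimpleGraph.mem_edgeFinset).mpr hz)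
  set F : ℝ → ℝ := fun s => ∑ e ∈ G.edgeFinset, Real.log (ω s e) with hF
  have hFd : ∀ t ≥ (0 : ℝ), HasDerivWithinAt F 0 (Set.Ici 0) t := by
    intro t ht
    have h2 := HasDerivWithinAt.fun_sum
      (fun e (he : e ∈ G.edgeFinset) =>
        ((hflow t ht e he).log (ne_of_gt (hpos t ht e he))))
    have hD : ∑ e ∈ G.edgeFinset, (-(edgeKappa G (ω t) e - κs e) * ω t e) / ω t e = 0 := by
      have hterm : ∀ e ∈ G.edgeFinset,
          (-(edgeKappa G (ω t) e - κs e) * ω t e) / ω t e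
            = κs e - edgeKappa G (ω t) e := by
        intro e he
        field_simp [ne_of_gt (hpos t ht e he)]
        ring
      rw [Finset.sum_congr rfl hterm, Finset.sum_sub_distrib, hsum,
        kappa_sum G (ω t) (hvm t ht)]
      ring
    rw [hD] at h2
    exact h2
  intro t ht
  have key : F t = F 0 := by
    have := constant_of_has_deriv_right_zero (f := F) (a := 0) (b := t)
      (fun x hx => ((hFd x hx.1).continuousWithinAt).mono Set.Icc_subset_Ici_self)
      (fun x hx => (hFd x hx.1).mono (Set.Ici_subset_Ici.mpr hx.1))
    exact this t (Set.right_mem_Icc.mpr ht)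
  have hp : ∀ s ≥ (0 : ℝ), ∏ e ∈ G.edgeFinset, ω s e = Real.exp (F s) := by
    intro s hs
    rw [hF, Real.exp_sum]
    exact Finset.prod_congr rfl fun e he => (Real.exp_log (hpos s hs e he)).symm
  rw [hp t ht, hp 0 le_rfl, key]
end

section
/- Let G=(V,E) be a finite connected simple graph with girth at least 6, let κ*:E→ℝ, and let ω:[0,∞)→ℝ^E be a solution of the prescribed-curvature Ricci flow with positive initial value. Then for every edge e_i = {x,y}, the curvature t ↦ κ_i(t) := κ_{e_i}(ω(t)) is differentiable and satisfies (d/dt)κ_i(t) = Σ_{e_j ∈ E(x), j≠i} (2ω_i(t)ω_j(t)/m(x)²)·[(κ_j(t)−κ*_j) − (κ_i(t)−κ*_i)] + Σ_{e_j ∈ E(y), j≠i} (2ω_i(t)ω_j(t)/m(y)²)·[(κ_j(t)−κ*_j) − (κ_i(t)−κ*_i)], where E(u) denotes the set of edges incident to the vertex u and m(x), m(y) are evaluated at the weights ω(t). -/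
open Finset

variable {V : Type*} [Fintype V] [DecidableEq V]

lemma incidenceFinset_eq_image (G : SimpleGraph V) [DecidableRel G.Adj] (x : V) :
    G.incidenceFinset x = (G.neighborFinset x).image (fun z => s(x, z)) := by
  ext e
  simp only [SimpleGraph.mem_incidenceFinset, Finset.mem_image,
    SimpleGraph.mem_neighborFinset]
  constructor
  · rintro ⟨he, hx⟩
    induction e with
    | _ a b =>
      rw [Sym2.mem_iff] at hx
      rw [SimpleGraph.mem_edgeSet] at he
      rcases hx with rfl | rfl
      · exact ⟨b, he, rfl⟩
      · exact ⟨a, he.symm, Sym2.eq_swap⟩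
  · rintro ⟨z, hz, rfl⟩
    exact ⟨(SimpleGraph.mem_edgeSet G).mpr hz, Sym2.mem_mk_left x z⟩

lemma sym2_mk_injective (x : V) : Function.Injective (fun z : V => s(x, z)) :=
  fun _ _ h => Sym2.congr_right.mp h

/-- Evolution equation of the curvature along the prescribed-curvature Ricci flow: for an edge
`e_i = {x,y}`, `κ_i' = Σ_{e_j ∈ E(x), j≠i} (2ω_iω_j/m(x)²)[(κ_j−κ*_j)−(κ_i−κ*_i)]
+ Σ_{e_j ∈ E(y), j≠i} (2ω_iω_j/m(y)²)[(κ_j−κ*_j)−(κ_i−κ*_i)]`. -/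
theorem curvature_evolution (G : SimpleGraph V) [DecidableRel G.Adj]
    (hconn : G.Connected) (hgirth : 6 ≤ G.egirth) (κs : Sym2 V → ℝ)
    (ω : ℝ → Sym2 V → ℝ)
    (hpos : ∀ t ≥ (0 : ℝ), ∀ e ∈ G.edgeFinset, 0 < ω t e)
    (hflow : ∀ t ≥ (0 : ℝ), ∀ e ∈ G.edgeFinset,
      HasDerivWithinAt (fun s => ω s e)
        (-(edgeKappa G (ω t) e - κs e) * ω t e) (Set.Ici 0) t)
    (x y : V) (hxy : G.Adj x y) :
    ∀ t ≥ (0 : ℝ),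
      HasDerivWithinAt (fun s => edgeKappa G (ω s) s(x, y))
        ((∑ f ∈ G.incidenceFinset x \ {s(x, y)},
            2 * ω t s(x, y) * ω t f / vm G (ω t) x ^ 2 *
              ((edgeKappa G (ω t) f - κs f) - (edgeKappa G (ω t) s(x, y) - κs s(x, y)))) +
          ∑ f ∈ G.incidenceFinset y \ {s(x, y)},
            2 * ω t s(x, y) * ω t f / vm G (ω t) y ^ 2 *
              ((edgeKappa G (ω t) f - κs f) - (edgeKappa G (ω t) s(x, y) - κs s(x, y))))
        (Set.Ici 0) t := by
  intro t ht
  have hx_mem : y ∈ G.neighborFinset x := by simpa using hxy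
  have hy_mem : x ∈ G.neighborFinset y := by simpa using hxy.symm
  have hedge : ∀ {a b : V}, G.Adj a b → s(a, b) ∈ G.edgeFinset :=
    fun h => SimpleGraph.mem_edgeFinset.mpr h
  -- positivity of vertex measures
  have hmpos : ∀ u : V, (G.neighborFinset u).Nonempty → 0 < vm G (ω t) u := by
    intro u hu
    exact Finset.sum_pos (fun z hz => hpos t ht _ (hedge (by simpa using hz))) hu
  have hmx : 0 < vm G (ω t) x := hmpos x ⟨y, hx_mem⟩
  have hmy : 0 < vm G (ω t) y := hmpos y ⟨x, hy_mem⟩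
  -- derivative of each weight
  have hDw : ∀ {a b : V}, G.Adj a b →
      HasDerivWithinAt (fun s => ω s s(a, b))
        (-(edgeKappa G (ω t) s(a, b) - κs s(a, b)) * ω t s(a, b)) (Set.Ici 0) t :=
    fun h => hflow t ht _ (hedge h)
  -- derivative of the vertex measure
  have hDm : ∀ u : V, HasDerivWithinAt (fun s => vm G (ω s) u)
      (∑ z ∈ G.neighborFinset u,
        -(edgeKappa G (ω t) s(u, z) - κs s(u, z)) * ω t s(u, z)) (Set.Ici 0) t := by
    intro u
    exact HasDerivWithinAt.fun_sum (fun z hz => hflow t ht _ (hedge (by simpa using hz)))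
  -- main derivative computation for the explicit formula
  have hmain : HasDerivWithinAt
      (fun s => 2 * ω s s(x, y) * ((vm G (ω s) x)⁻¹ + (vm G (ω s) y)⁻¹) - 2)
      (2 * (-(edgeKappa G (ω t) s(x, y) - κs s(x, y)) * ω t s(x, y)) *
          ((vm G (ω t) x)⁻¹ + (vm G (ω t) y)⁻¹) +
        2 * ω t s(x, y) *
          (-(∑ z ∈ G.neighborFinset x,
              -(edgeKappa G (ω t) s(x, z) - κs s(x, z)) * ω t s(x, z)) / vm G (ω t) x ^ 2 +
           -(∑ z ∈ G.neighborFinset y,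
              -(edgeKappa G (ω t) s(y, z) - κs s(y, z)) * ω t s(y, z)) / vm G (ω t) y ^ 2))
      (Set.Ici 0) t := by
    exact (((hDw hxy).const_mul 2).mul
      (((hDm x).inv hmx.ne').add ((hDm y).inv hmy.ne'))).sub_const 2
  have hfun : (fun s => edgeKappa G (ω s) s(x, y)) =
      (fun s => 2 * ω s s(x, y) * ((vm G (ω s) x)⁻¹ + (vm G (ω s) y)⁻¹) - 2) := by
    funext s
    simp [edgeKappa, one_div]
  rw [hfun]
  -- rewrite the incidence sums as sums over neighbours
  have hxF : G.incidenceFinset x \ {s(x, y)} =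
      (G.neighborFinset x \ {y}).image (fun z => s(x, z)) := by
    rw [incidenceFinset_eq_image, Finset.image_sdiff _ _ (sym2_mk_injective x)]
    simp
  have hyF : G.incidenceFinset y \ {s(x, y)} =
      (G.neighborFinset y \ {x}).image (fun z => s(y, z)) := by
    rw [incidenceFinset_eq_image, Finset.image_sdiff _ _ (sym2_mk_injective y)]
    congr 1
    simp [Sym2.eq_swap]
  rw [hxF, hyF, Finset.sum_image (fun a _ b _ h => sym2_mk_injective x h),
    Finset.sum_image (fun a _ b _ h => sym2_mk_injective y h)]
  -- now an algebraic identity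
  have hsplitx : ∀ g : V → ℝ, ∑ z ∈ G.neighborFinset x, g z
      = ∑ z ∈ G.neighborFinset x \ {y}, g z + g y := fun g =>
    Finset.sum_eq_sum_sdiff_singleton_add hx_mem g
  have hsplity : ∀ g : V → ℝ, ∑ z ∈ G.neighborFinset y, g z
      = ∑ z ∈ G.neighborFinset y \ {x}, g z + g x := fun g =>
    Finset.sum_eq_sum_sdiff_singleton_add hy_mem g
  set wi := ω t s(x, y) with hwi
  set di := edgeKappa G (ω t) s(x, y) - κs s(x, y) with hdi
  set P := ∑ z ∈ G.neighborFinset x \ {y},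
      (edgeKappa G (ω t) s(x, z) - κs s(x, z)) * ω t s(x, z) with hP
  set Q := ∑ z ∈ G.neighborFinset y \ {x},
      (edgeKappa G (ω t) s(y, z) - κs s(y, z)) * ω t s(y, z) with hQ
  set S := ∑ z ∈ G.neighborFinset x \ {y}, ω t s(x, z) with hS
  set T := ∑ z ∈ G.neighborFinset y \ {x}, ω t s(y, z) with hT
  have hMX : (∑ z ∈ G.neighborFinset x,
      -(edgeKappa G (ω t) s(x, z) - κs s(x, z)) * ω t s(x, z)) = -(di * wi) - P := by
    rw [hsplitx]
    simp only [neg_mul, Finset.sum_neg_distrib, hP]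
    ring
  have hMY : (∑ z ∈ G.neighborFinset y,
      -(edgeKappa G (ω t) s(y, z) - κs s(y, z)) * ω t s(y, z)) = -(di * wi) - Q := by
    rw [hsplity]
    simp only [neg_mul, Finset.sum_neg_distrib, hQ]
    rw [Sym2.eq_swap (a := y) (b := x)]
    ring
  have hmxS : vm G (ω t) x = S + wi := by
    rw [vm, hsplitx (fun z => ω t s(x, z))]
  have hmyT : vm G (ω t) y = T + wi := by
    rw [vm, hsplity (fun z => ω t s(y, z)), Sym2.eq_swap (a := y) (b := x)]
  have hsum1 : ∑ z ∈ G.neighborFinset x \ {y},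
      2 * wi * ω t s(x, z) / vm G (ω t) x ^ 2 *
        ((edgeKappa G (ω t) s(x, z) - κs s(x, z)) - di)
      = 2 * wi / vm G (ω t) x ^ 2 * P - 2 * wi * di / vm G (ω t) x ^ 2 * S := by
    rw [hP, hS, Finset.mul_sum, Finset.mul_sum, ← Finset.sum_sub_distrib]
    exact Finset.sum_congr rfl fun z _ => by ring
  have hsum2 : ∑ z ∈ G.neighborFinset y \ {x},
      2 * wi * ω t s(y, z) / vm G (ω t) y ^ 2 *
        ((edgeKappa G (ω t) s(y, z) - κs s(y, z)) - di)
      = 2 * wi / vm G (ω t) y ^ 2 * Q - 2 * wi * di / vm G (ω t) y ^ 2 * T := by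
    rw [hQ, hT, Finset.mul_sum, Finset.mul_sum, ← Finset.sum_sub_distrib]
    exact Finset.sum_congr rfl fun z _ => by ring
  rw [hsum1, hsum2]
  have hSval : S = vm G (ω t) x - wi := by rw [hmxS]; ring
  have hTval : T = vm G (ω t) y - wi := by rw [hmyT]; ring
  rw [hSval, hTval]
  have H := hmain
  rw [hMX, hMY] at H
  have : (2 * wi / vm G (ω t) x ^ 2 * P -
        2 * wi * di / vm G (ω t) x ^ 2 * (vm G (ω t) x - wi)) +
      (2 * wi / vm G (ω t) y ^ 2 * Q -
        2 * wi * di / vm G (ω t) y ^ 2 * (vm G (ω t) y - wi))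
      = 2 * (-di * wi) * ((vm G (ω t) x)⁻¹ + (vm G (ω t) y)⁻¹) +
        2 * wi * (-(-(di * wi) - P) / vm G (ω t) x ^ 2 +
          -(-(di * wi) - Q) / vm G (ω t) y ^ 2) := by
    field_simp
    ring
  rw [this]
  exact H
end

section
/- Let G=(V,E) be a finite connected simple graph with girth at least 6 and let κ*:E→ℝ satisfy Σ_{e∈E} κ*_e = 2(|V| − |E|). Suppose ω:[0,∞)→ℝ^E is a solution of the prescribed-curvature Ricci flow with positive initial value, and suppose ω(t) converges as t→+∞ to a limit ω(∞) with ω_e(∞) > 0 for every e∈E. Then κ_e(ω(∞)) = κ*_e for every edge e. In particular, if a solution of the flow converges to a positive limit, then κ* is attainable and the limit is a weight realizing the prescribed curvature κ*. -/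
open Finset

variable {V : Type*} [Fintype V] [DecidableEq V]

open Filter in
/-- If `f` converges at infinity and its derivative `g` converges at infinity,
then the limit of the derivative is `0`. -/
lemma deriv_tendsto_zero_of_tendsto (f g : ℝ → ℝ) (A L : ℝ)
    (hderiv : ∀ t ≥ (0 : ℝ), HasDerivWithinAt f (g t) (Set.Ici 0) t)
    (hf : Tendsto f atTop (nhds A)) (hg : Tendsto g atTop (nhds L)) : L = 0 := by
  have key : ∀ n : ℕ, ∃ c ∈ Set.Ioo ((n : ℝ) + 1) ((n : ℝ) + 2),
      g c = f ((n : ℝ) + 2) - f ((n : ℝ) + 1) := by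
    intro n
    have hab : (n : ℝ) + 1 < (n : ℝ) + 2 := by linarith
    have hsub : Set.Icc ((n : ℝ) + 1) ((n : ℝ) + 2) ⊆ Set.Ici 0 := by
      intro x hx
      have : (0:ℝ) ≤ (n:ℝ) + 1 := by positivity
      exact le_trans this hx.1
    have hcont : ContinuousOn f (Set.Icc ((n : ℝ) + 1) ((n : ℝ) + 2)) := by
      intro x hx
      have hx0 : (0:ℝ) ≤ x := hsub hx
      exact ((hderiv x hx0).continuousWithinAt).mono hsub
    have hderiv' : ∀ x ∈ Set.Ioo ((n : ℝ) + 1) ((n : ℝ) + 2), HasDerivAt f (g x) x := by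
      intro x hx
      have hx0 : (0:ℝ) < x := lt_trans (by positivity) hx.1
      exact (hderiv x hx0.le).hasDerivAt (Ici_mem_nhds hx0)
    obtain ⟨c, hc, hceq⟩ := exists_hasDerivAt_eq_slope f g hab hcont hderiv'
    refine ⟨c, hc, ?_⟩
    rw [hceq, show ((n:ℝ) + 2 - ((n:ℝ) + 1)) = 1 by ring, div_one]
  choose c hc hceq using key
  have hct : Tendsto c atTop atTop := by
    apply tendsto_atTop_mono (fun n => (hc n).1.le)
    apply tendsto_atTop_add_const_right
    exact tendsto_natCast_atTop_atTop
  have h1 : Tendsto (fun n => g (c n)) atTop (nhds L) := hg.comp hct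
  have h2 : Tendsto (fun n : ℕ => f ((n : ℝ) + 2) - f ((n : ℝ) + 1)) atTop (nhds (A - A)) := by
    apply Tendsto.sub
    · exact hf.comp (tendsto_atTop_add_const_right _ 2 tendsto_natCast_atTop_atTop)
    · exact hf.comp (tendsto_atTop_add_const_right _ 1 tendsto_natCast_atTop_atTop)
  rw [sub_self] at h2
  have : Tendsto (fun n => g (c n)) atTop (nhds 0) := by
    simpa only [hceq] using h2
  exact tendsto_nhds_unique h1 this

/-- If a solution of the prescribed-curvature Ricci flow converges to a positive limit, then
the limit weight realizes the prescribed curvature `κ*` (assuming the necessary normalization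
`Σ_e κ*_e = 2(|V| − |E|)`). -/
theorem ricci_flow_limit_realizes (G : SimpleGraph V) [DecidableRel G.Adj]
    (hconn : G.Connected) (hgirth : 6 ≤ G.egirth) (κs : Sym2 V → ℝ)
    (hsum : ∑ e ∈ G.edgeFinset, κs e =
      2 * ((Fintype.card V : ℝ) - (G.edgeFinset.card : ℝ)))
    (ω : ℝ → Sym2 V → ℝ)
    (hpos : ∀ t ≥ (0 : ℝ), ∀ e ∈ G.edgeFinset, 0 < ω t e)
    (hflow : ∀ t ≥ (0 : ℝ), ∀ e ∈ G.edgeFinset,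
      HasDerivWithinAt (fun s => ω s e)
        (-(edgeKappa G (ω t) e - κs e) * ω t e) (Set.Ici 0) t)
    (ωinf : Sym2 V → ℝ) (hωinf : ∀ e ∈ G.edgeFinset, 0 < ωinf e)
    (hlim : ∀ e ∈ G.edgeFinset,
      Filter.Tendsto (fun t => ω t e) Filter.atTop (nhds (ωinf e))) :
    ∀ e ∈ G.edgeFinset, edgeKappa G ωinf e = κs e := by
  have hvm : ∀ x : V, Filter.Tendsto (fun t => vm G (ω t) x) Filter.atTop
      (nhds (vm G ωinf x)) := by
    intro x
    unfold vm
    apply tendsto_finset_sum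
    intro y hy
    apply hlim
    rw [SimpleGraph.mem_edgeFinset, SimpleGraph.mem_edgeSet]
    exact (SimpleGraph.mem_neighborFinset G x y).1 hy
  have hvmpos : ∀ x y : V, G.Adj x y → 0 < vm G ωinf x := by
    intro x y hadj
    apply Finset.sum_pos
    · intro z hz
      apply hωinf
      rw [SimpleGraph.mem_edgeFinset, SimpleGraph.mem_edgeSet]
      exact (SimpleGraph.mem_neighborFinset G x z).1 hz
    · exact ⟨y, (SimpleGraph.mem_neighborFinset G x y).2 hadj⟩
  intro e he
  have hωe : 0 < ωinf e := hωinf e he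
  have hκ : Filter.Tendsto (fun t => edgeKappa G (ω t) e) Filter.atTop
      (nhds (edgeKappa G ωinf e)) := by
    clear hωe
    induction e using Sym2.ind with
    | _ x y =>
      have hadj : G.Adj x y := by
        rwa [SimpleGraph.mem_edgeFinset, SimpleGraph.mem_edgeSet] at he
      have hvx : 0 < vm G ωinf x := hvmpos x y hadj
      have hvy : 0 < vm G ωinf y := hvmpos y x hadj.symm
      simp only [edgeKappa, Sym2.lift_mk, one_div]
      apply Filter.Tendsto.sub _ tendsto_const_nhds
      apply Filter.Tendsto.mul
      · exact Filter.Tendsto.mul tendsto_const_nhds (hlim _ he)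
      · exact Filter.Tendsto.add ((hvm x).inv₀ hvx.ne') ((hvm y).inv₀ hvy.ne')
  have hg : Filter.Tendsto (fun t => -(edgeKappa G (ω t) e - κs e) * ω t e) Filter.atTop
      (nhds (-(edgeKappa G ωinf e - κs e) * ωinf e)) :=
    ((hκ.sub tendsto_const_nhds).neg).mul (hlim e he)
  have hL : -(edgeKappa G ωinf e - κs e) * ωinf e = 0 :=
    deriv_tendsto_zero_of_tendsto (fun t => ω t e)
      (fun t => -(edgeKappa G (ω t) e - κs e) * ω t e) (ωinf e) _
      (fun t ht => hflow t ht e he) (hlim e he) hg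
  rcases mul_eq_zero.1 hL with h | h
  · linarith [neg_eq_zero.1 h, sub_eq_zero.1 (neg_eq_zero.1 h)]
  · exact absurd h hωe.ne'
end
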